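/- arXiv:2405.06280 — 9 statements merged into one kernel-verified Lean document; each statement's English description precedes it below -/
import Mathlib

section
/- For all u, v ∈ ℝ³, setting u₀ = √(1+|u|²), v₀ = √(1+|v|²), s = 2(u₀v₀ - u·v + 1), and g = √(s-4), one has √(|u-v|² + |u×v|²)/√(u₀v₀) ≤ g ≤ |u-v|. -/
open scoped RealInnerProductSpace

noncomputable def energy (v : EuclideanSpace ℝ (Fin 3)) : ℝ := Real.sqrt (1 + ‖v‖ ^ 2)

noncomputable def relMom (u v : EuclideanSpace ℝ (Fin 3)) : ℝ :=
  Real.sqrt (2 * (energy u * energy v - ⟪u, v⟫ + 1) - 4)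

noncomputable def cross3 (u v : EuclideanSpace ℝ (Fin 3)) : EuclideanSpace ℝ (Fin 3) :=
  (WithLp.equiv 2 (Fin 3 → ℝ)).symm
    ![u 1 * v 2 - u 2 * v 1, u 2 * v 0 - u 0 * v 2, u 0 * v 1 - u 1 * v 0]

/-!
With `E = u₀v₀` and `k = 1 + u·v`, Lagrange's identity gives
`|u - v|² + |u × v|² = (1 + |u|²)(1 + |v|²) - (1 + u·v)² = E² - k²`, while `g² = 2(E - k)`.
Since `E² - k² = 2(E - k)E - (E - k)²`, the lower bound is `E² - k² ≤ g² E`, and the upper bound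
`g² ≤ |u - v|²` is the AM-GM inequality `2 u₀v₀ ≤ u₀² + v₀²`.
-/

open Matrix WithLp

theorem cross3_eq_crossProduct (u v : EuclideanSpace ℝ (Fin 3)) :
    cross3 u v = toLp 2 (ofLp u ⨯₃ ofLp v) :=
  rfl

theorem norm_cross3_sq (u v : EuclideanSpace ℝ (Fin 3)) :
    ‖cross3 u v‖ ^ 2 = ‖u‖ ^ 2 * ‖v‖ ^ 2 - ⟪u, v⟫ ^ 2 := by
  simp_rw [cross3_eq_crossProduct, ← real_inner_self_eq_norm_sq,
    EuclideanSpace.inner_eq_star_dotProduct, star_trivial, cross_dot_cross,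
    dotProduct_comm (ofLp v) (ofLp u), sq]

theorem energy_sq (v : EuclideanSpace ℝ (Fin 3)) : energy v ^ 2 = 1 + ‖v‖ ^ 2 :=
  Real.sq_sqrt (by positivity)

theorem energy_pos (v : EuclideanSpace ℝ (Fin 3)) : 0 < energy v :=
  Real.sqrt_pos.mpr (by positivity)

theorem norm_sub_sq_add_norm_cross3_sq (u v : EuclideanSpace ℝ (Fin 3)) :
    ‖u - v‖ ^ 2 + ‖cross3 u v‖ ^ 2 = (energy u * energy v) ^ 2 - (1 + ⟪u, v⟫) ^ 2 := by
  rw [norm_sub_sq_real, norm_cross3_sq, mul_pow, energy_sq, energy_sq]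
  ring

theorem two_mul_energy_mul_energy_le (u v : EuclideanSpace ℝ (Fin 3)) :
    2 * (energy u * energy v) ≤ 2 + ‖u‖ ^ 2 + ‖v‖ ^ 2 := by
  nlinarith [sq_nonneg (energy u - energy v), energy_sq u, energy_sq v]

theorem relMom_eq (u v : EuclideanSpace ℝ (Fin 3)) :
    relMom u v = Real.sqrt (2 * (energy u * energy v - (1 + ⟪u, v⟫))) := by
  rw [relMom]
  ring_nf

/-- Bounds on the relativistic relative momentum `g`:
`√(|u-v|² + |u×v|²)/√(u₀v₀) ≤ g ≤ |u-v|`. -/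
theorem relMom_bounds (u v : EuclideanSpace ℝ (Fin 3)) :
    Real.sqrt (‖u - v‖ ^ 2 + ‖cross3 u v‖ ^ 2) / Real.sqrt (energy u * energy v)
      ≤ relMom u v ∧ relMom u v ≤ ‖u - v‖ := by
  have hE : 0 < energy u * energy v := mul_pos (energy_pos u) (energy_pos v)
  rw [relMom_eq]
  constructor
  · rw [← Real.sqrt_div' _ hE.le, norm_sub_sq_add_norm_cross3_sq]
    refine Real.sqrt_le_sqrt ((div_le_iff₀ hE).2 ?_)
    linarith [sq_nonneg (energy u * energy v - (1 + ⟪u, v⟫))]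
  · rw [← Real.sqrt_sq (norm_nonneg (u - v)), norm_sub_sq_real]
    exact Real.sqrt_le_sqrt (by linarith [two_mul_energy_mul_energy_le u v])
end

section
/- Define ν(v) = 4π ∫_{ℝ³} (g√(4+g²)/(u₀v₀)) e^{-√(1+|u|²)} du, where u₀ = √(1+|u|²), v₀ = √(1+|v|²), s = 2(u₀v₀ - u·v + 1), g = √(s-4). Then there exist constants 0 < ν₀ ≤ ν₁ such that ν₀ ≤ ν(v) ≤ ν₁ for all v ∈ ℝ³. -/
open MeasureTheory Real
open scoped RealInnerProductSpace

/-- The collision frequency of the relativistic Boltzmann equation with hard-ball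
cross section. -/
noncomputable def collFreq (v : EuclideanSpace ℝ (Fin 3)) : ℝ :=
  4 * π * ∫ u : EuclideanSpace ℝ (Fin 3),
    relMom u v * Real.sqrt (4 + relMom u v ^ 2) / (energy u * energy v) *
      Real.exp (-Real.sqrt (1 + ‖u‖ ^ 2))

namespace CollFreqAux

local notation "E3" => EuclideanSpace ℝ (Fin 3)

lemma one_le_energy (v : E3) : 1 ≤ energy v := by
  rw [energy, Real.le_sqrt one_pos.le (by positivity)]
  nlinarith [sq_nonneg ‖v‖]

lemma energy_pos (v : E3) : 0 < energy v := lt_of_lt_of_le one_pos (one_le_energy v)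

lemma energy_sq (v : E3) : energy v ^ 2 = 1 + ‖v‖ ^ 2 :=
  Real.sq_sqrt (by positivity)

lemma norm_le_energy (v : E3) : ‖v‖ ≤ energy v := by
  rw [energy, Real.le_sqrt (norm_nonneg v) (by positivity)]
  linarith

lemma one_le_prod (u v : E3) : 1 ≤ energy u * energy v :=
  (one_le_energy u).trans (le_mul_of_one_le_right (energy_pos u).le (one_le_energy v))

lemma prod_pos (u v : E3) : 0 < energy u * energy v :=
  lt_of_lt_of_le one_pos (one_le_prod u v)

lemma abs_inner_le_prod (u v : E3) : |⟪u, v⟫| ≤ energy u * energy v :=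
  le_trans (abs_real_inner_le_norm u v)
    (mul_le_mul (norm_le_energy u) (norm_le_energy v) (norm_nonneg v) (energy_pos u).le)

lemma one_add_le_prod (u v : E3) : 1 + ‖u‖ * ‖v‖ ≤ energy u * energy v := by
  have h : energy u * energy v = Real.sqrt ((1 + ‖u‖^2) * (1 + ‖v‖^2)) := by
    rw [energy, energy, ← Real.sqrt_mul (by positivity)]
  rw [h, Real.le_sqrt (by positivity) (by positivity)]
  nlinarith [sq_nonneg (‖u‖ - ‖v‖)]

lemma relMom_arg_nonneg (u v : E3) :
    0 ≤ 2 * (energy u * energy v - ⟪u, v⟫ + 1) - 4 := by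
  have h1 := one_add_le_prod u v
  have h2 : ⟪u, v⟫ ≤ ‖u‖ * ‖v‖ := real_inner_le_norm u v
  linarith

lemma relMom_nonneg (u v : E3) : 0 ≤ relMom u v := Real.sqrt_nonneg _

lemma relMom_sq (u v : E3) :
    relMom u v ^ 2 = 2 * (energy u * energy v - ⟪u, v⟫ + 1) - 4 :=
  Real.sq_sqrt (relMom_arg_nonneg u v)

/-- The integrand. -/
noncomputable def Ffun (v u : E3) : ℝ :=
  relMom u v * Real.sqrt (4 + relMom u v ^ 2) / (energy u * energy v) *
    Real.exp (-energy u)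

lemma collFreq_eq (v : E3) : collFreq v = 4 * π * ∫ u : E3, Ffun v u := rfl

noncomputable def Afun (v u : E3) : ℝ :=
  (2 - 2 / (energy u * energy v)) * Real.exp (-energy u)

noncomputable def Bfun (v u : E3) : ℝ :=
  (-(2 * ⟪u, v⟫) / (energy u * energy v)) * Real.exp (-energy u)

noncomputable def Cfun (u : E3) : ℝ := (2 - 2 / energy u) * Real.exp (-energy u)

lemma continuous_energy : Continuous energy := by
  unfold energy; fun_prop

lemma continuous_relMom (v : E3) : Continuous fun u : E3 => relMom u v := by
  unfold relMom
  apply Real.continuous_sqrt.comp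
  have hinner : Continuous fun u : E3 => ⟪u, v⟫ := continuous_id.inner continuous_const
  have he := continuous_energy
  exact (continuous_const.mul (((he.mul continuous_const).sub hinner).add
    continuous_const)).sub continuous_const

lemma continuous_Ffun (v : E3) : Continuous (Ffun v) := by
  unfold Ffun
  have h1 := continuous_relMom v
  have h2 : Continuous fun u : E3 => energy u * energy v :=
    continuous_energy.mul continuous_const
  exact (((h1.mul ((continuous_const.add (h1.pow 2)).sqrt)).div h2
    (fun u => (prod_pos u v).ne')).mul (continuous_energy.neg.rexp))

lemma continuous_Afun (v : E3) : Continuous (Afun v) := by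
  unfold Afun
  have h2 : Continuous fun u : E3 => energy u * energy v :=
    continuous_energy.mul continuous_const
  exact ((continuous_const.sub (continuous_const.div h2
    (fun u => (prod_pos u v).ne'))).mul (continuous_energy.neg.rexp))

lemma continuous_Bfun (v : E3) : Continuous (Bfun v) := by
  unfold Bfun
  have h1 : Continuous fun u : E3 => ⟪u, v⟫ := continuous_id.inner continuous_const
  have h2 : Continuous fun u : E3 => energy u * energy v :=
    continuous_energy.mul continuous_const
  exact (((continuous_const.mul h1).neg.div h2
    (fun u => (prod_pos u v).ne')).mul (continuous_energy.neg.rexp))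

lemma continuous_Cfun : Continuous Cfun := by
  unfold Cfun
  exact ((continuous_const.sub (continuous_const.div continuous_energy
    (fun u => (energy_pos u).ne'))).mul (continuous_energy.neg.rexp))

/-- Integrability of the Jüttner weight. -/
lemma integrable_exp_energy : Integrable (fun u : E3 => Real.exp (-energy u)) := by
  have hint : Integrable (fun x : E3 => 384 * (1 + ‖x‖) ^ (-(4:ℝ))) :=
    (integrable_one_add_norm (by simp; norm_num)).const_mul 384
  refine hint.mono' (continuous_energy.neg.rexp).aestronglyMeasurable ?_
  filter_upwards with u
  have hn : (0:ℝ) ≤ ‖u‖ := norm_nonneg u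
  have hepos : (0:ℝ) < energy u := energy_pos u
  have h1 : (1 + ‖u‖) / 2 ≤ energy u := by
    rw [energy, Real.le_sqrt (by positivity) (by positivity)]
    nlinarith [sq_nonneg (‖u‖ - 1)]
  have he : energy u ^ 4 / 24 ≤ Real.exp (energy u) := by
    have := Real.pow_div_factorial_le_exp (energy u) hepos.le 4
    norm_num [Nat.factorial] at this
    linarith
  have hpow : (1 + ‖u‖) ^ 4 ≤ 16 * energy u ^ 4 := by
    have h2 : ((1 + ‖u‖)/2) ^ 4 ≤ energy u ^ 4 := pow_le_pow_left₀ (by positivity) h1 4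
    nlinarith [h2]
  have hre : Real.exp (-energy u) ≤ 24 / energy u ^ 4 := by
    rw [Real.exp_neg, show (24:ℝ) / energy u ^ 4 = (energy u ^ 4 / 24)⁻¹ by
      rw [inv_div]]
    exact inv_anti₀ (by positivity) he
  have hrpow : (1 + ‖u‖) ^ (-(4:ℝ)) = ((1 + ‖u‖) ^ (4:ℕ))⁻¹ := by
    rw [Real.rpow_neg (by positivity), ← Real.rpow_natCast (1 + ‖u‖) 4]
    norm_num
  rw [Real.norm_eq_abs, abs_of_pos (Real.exp_pos _), hrpow]
  have h24 : 24 / energy u ^ 4 ≤ 384 * ((1 + ‖u‖) ^ (4:ℕ))⁻¹ := by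
    rw [show (384:ℝ) * ((1 + ‖u‖) ^ (4:ℕ))⁻¹ = 384 / (1 + ‖u‖) ^ (4:ℕ) by ring,
      div_le_div_iff₀ (by positivity) (by positivity)]
    nlinarith [hpow]
  linarith

lemma exp_energy_pos (u : E3) : 0 < Real.exp (-energy u) := Real.exp_pos _

lemma Ffun_nonneg (v u : E3) : 0 ≤ Ffun v u :=
  mul_nonneg (div_nonneg (mul_nonneg (relMom_nonneg u v) (Real.sqrt_nonneg _))
    (prod_pos u v).le) (Real.exp_pos _).le

lemma Ffun_le (v u : E3) : Ffun v u ≤ 6 * Real.exp (-energy u) := by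
  set a := relMom u v with ha
  set P := energy u * energy v with hP
  have hP1 : 1 ≤ P := one_le_prod u v
  have hP0 : 0 < P := prod_pos u v
  have ha0 : 0 ≤ a := relMom_nonneg u v
  have hip : |⟪u, v⟫| ≤ P := abs_inner_le_prod u v
  have ha2 : a ^ 2 ≤ 4 * P := by
    rw [relMom_sq u v]
    have := abs_le.mp hip
    linarith [this.1, this.2]
  have key : a * Real.sqrt (4 + a ^ 2) ≤ 6 * P := by
    have h1 : a * Real.sqrt (4 + a ^ 2) = Real.sqrt (a ^ 2 * (4 + a ^ 2)) := by
      rw [Real.sqrt_mul (sq_nonneg a), Real.sqrt_sq ha0]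
    rw [h1, show (6:ℝ) * P = Real.sqrt ((6 * P) ^ 2) by
      rw [Real.sqrt_sq (by positivity)]]
    apply Real.sqrt_le_sqrt
    nlinarith [sq_nonneg a, ha2, hP1]
  unfold Ffun
  rw [← ha, ← hP]
  have hexp := (Real.exp_pos (-energy u)).le
  apply mul_le_mul_of_nonneg_right _ hexp
  rw [div_le_iff₀ hP0]
  nlinarith [key, hP1]

lemma Ffun_ge (v u : E3) : Afun v u + Bfun v u ≤ Ffun v u := by
  set a := relMom u v with ha
  set P := energy u * energy v with hP
  have hP0 : 0 < P := prod_pos u v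
  have ha0 : 0 ≤ a := relMom_nonneg u v
  have hsum : Afun v u + Bfun v u = (a ^ 2 / P) * Real.exp (-energy u) := by
    unfold Afun Bfun
    rw [← hP, relMom_sq u v, ← hP]
    field_simp
    ring
  rw [hsum]
  unfold Ffun
  rw [← ha, ← hP]
  apply mul_le_mul_of_nonneg_right _ (Real.exp_pos _).le
  have hle : a ≤ Real.sqrt (4 + a ^ 2) :=
    (Real.le_sqrt ha0 (by positivity)).mpr (by linarith)
  have : a ^ 2 ≤ a * Real.sqrt (4 + a ^ 2) := by nlinarith [hle, ha0]
  gcongr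

lemma integrable_Ffun (v : E3) : Integrable (Ffun v) := by
  refine (integrable_exp_energy.const_mul 6).mono'
    (continuous_Ffun v).aestronglyMeasurable ?_
  filter_upwards with u
  rw [Real.norm_eq_abs, abs_of_nonneg (Ffun_nonneg v u)]
  exact Ffun_le v u

lemma two_div_prod_le (u v : E3) : 2 / (energy u * energy v) ≤ 2 := by
  rw [div_le_iff₀ (prod_pos u v)]
  nlinarith [one_le_prod u v]

lemma integrable_Afun (v : E3) : Integrable (Afun v) := by
  refine (integrable_exp_energy.const_mul 2).mono'
    (continuous_Afun v).aestronglyMeasurable ?_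
  filter_upwards with u
  unfold Afun
  rw [Real.norm_eq_abs, abs_mul, abs_of_pos (Real.exp_pos _)]
  have h0 : 0 ≤ 2 / (energy u * energy v) := div_nonneg (by norm_num) (prod_pos u v).le
  have h1 := two_div_prod_le u v
  have : |2 - 2 / (energy u * energy v)| ≤ 2 := abs_le.mpr ⟨by linarith, by linarith⟩
  nlinarith [Real.exp_pos (-energy u), this, abs_nonneg (2 - 2 / (energy u * energy v))]

lemma integrable_Bfun (v : E3) : Integrable (Bfun v) := by
  refine (integrable_exp_energy.const_mul 2).mono'
    (continuous_Bfun v).aestronglyMeasurable ?_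
  filter_upwards with u
  unfold Bfun
  rw [Real.norm_eq_abs, abs_mul, abs_of_pos (Real.exp_pos _)]
  have hP0 := prod_pos u v
  have : |(-(2 * ⟪u, v⟫)) / (energy u * energy v)| ≤ 2 := by
    rw [abs_div, abs_neg, abs_mul, abs_of_pos hP0, abs_of_pos (by norm_num : (0:ℝ) < 2)]
    rw [div_le_iff₀ hP0]
    nlinarith [abs_inner_le_prod u v, abs_nonneg ⟪u, v⟫]
  nlinarith [Real.exp_pos (-energy u), this,
    abs_nonneg ((-(2 * ⟪u, v⟫)) / (energy u * energy v))]

lemma Cfun_nonneg (u : E3) : 0 ≤ Cfun u := by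
  unfold Cfun
  have h1 : 2 / energy u ≤ 2 := by
    rw [div_le_iff₀ (energy_pos u)]
    nlinarith [one_le_energy u]
  have := (Real.exp_pos (-energy u)).le
  nlinarith

lemma Cfun_le_two_exp (u : E3) : Cfun u ≤ 2 * Real.exp (-energy u) := by
  unfold Cfun
  have h0 : 0 ≤ 2 / energy u := div_nonneg (by norm_num) (energy_pos u).le
  nlinarith [Real.exp_pos (-energy u)]

lemma integrable_Cfun : Integrable Cfun := by
  refine (integrable_exp_energy.const_mul 2).mono'
    continuous_Cfun.aestronglyMeasurable ?_
  filter_upwards with u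
  rw [Real.norm_eq_abs, abs_of_nonneg (Cfun_nonneg u)]
  exact Cfun_le_two_exp u

lemma energy_neg (u : E3) : energy (-u) = energy u := by simp [energy]

lemma integral_Bfun (v : E3) : ∫ u : E3, Bfun v u = 0 := by
  have hodd : ∀ u : E3, Bfun v (-u) = - Bfun v u := by
    intro u
    unfold Bfun
    rw [energy_neg, inner_neg_left]
    ring
  have h := integral_neg_eq_self (Bfun v) (volume : Measure E3)
  simp only [hodd, integral_neg] at h
  linarith

lemma Cfun_le_Afun (v u : E3) : Cfun u ≤ Afun v u := by
  unfold Afun Cfun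
  have h1 : 2 / (energy u * energy v) ≤ 2 / energy u := by
    apply div_le_div_of_nonneg_left (by norm_num) (energy_pos u)
    exact le_mul_of_one_le_right (energy_pos u).le (one_le_energy v)
  exact mul_le_mul_of_nonneg_right (by linarith) (Real.exp_pos _).le

lemma integral_Cfun_pos : 0 < ∫ u : E3, Cfun u := by
  rw [integral_pos_iff_support_of_nonneg (fun u => Cfun_nonneg u) integrable_Cfun]
  have hball : Metric.ball (EuclideanSpace.single (0 : Fin 3) (2:ℝ)) 1 ⊆
      Function.support Cfun := by
    intro u hu
    have hd : dist u (EuclideanSpace.single (0 : Fin 3) (2:ℝ)) < 1 := Metric.mem_ball.mp hu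
    have hnp : ‖EuclideanSpace.single (0 : Fin 3) (2:ℝ)‖ = 2 := by
      rw [EuclideanSpace.norm_single]; norm_num
    have hnorm : (1:ℝ) < ‖u‖ := by
      have h1 := norm_sub_norm_le (EuclideanSpace.single (0 : Fin 3) (2:ℝ)) u
      rw [hnp] at h1
      have h2 : ‖EuclideanSpace.single (0 : Fin 3) (2:ℝ) - u‖ = dist u (EuclideanSpace.single (0 : Fin 3) (2:ℝ)) := by
        rw [dist_eq_norm, norm_sub_rev]
      linarith [h2 ▸ h1]
    have heu : 1 < energy u := by
      rw [energy]
      exact (Real.lt_sqrt one_pos.le).mpr (by nlinarith)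
    have hpos : 0 < Cfun u := by
      unfold Cfun
      have h1 : 2 / energy u < 2 := by
        rw [div_lt_iff₀ (energy_pos u)]
        nlinarith
      have := Real.exp_pos (-energy u)
      nlinarith
    exact Function.mem_support.mpr hpos.ne'
  calc (0:ENNReal) < volume (Metric.ball (EuclideanSpace.single (0 : Fin 3) (2:ℝ)) 1) :=
        Metric.measure_ball_pos volume _ one_pos
    _ ≤ volume (Function.support Cfun) := measure_mono hball

lemma lower (v : E3) : 4 * π * ∫ u : E3, Cfun u ≤ collFreq v := by
  rw [collFreq_eq]
  apply mul_le_mul_of_nonneg_left _ (by positivity)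
  have h1 : ∫ u : E3, Cfun u ≤ ∫ u : E3, Afun v u :=
    integral_mono integrable_Cfun (integrable_Afun v) (fun u => Cfun_le_Afun v u)
  have h2 : ∫ u : E3, (Afun v u + Bfun v u) ≤ ∫ u : E3, Ffun v u :=
    integral_mono ((integrable_Afun v).add (integrable_Bfun v)) (integrable_Ffun v)
      (fun u => Ffun_ge v u)
  rw [integral_add (integrable_Afun v) (integrable_Bfun v), integral_Bfun v, add_zero] at h2
  linarith

lemma upper (v : E3) : collFreq v ≤ 4 * π * (6 * ∫ u : E3, Real.exp (-energy u)) := by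
  rw [collFreq_eq]
  apply mul_le_mul_of_nonneg_left _ (by positivity)
  have h := integral_mono (integrable_Ffun v) (integrable_exp_energy.const_mul 6)
    (fun u => Ffun_le v u)
  rwa [integral_const_mul] at h

end CollFreqAux

/-- The collision frequency is bounded above and below by positive constants. -/
theorem collFreq_bounds :
    ∃ ν₀ ν₁ : ℝ, 0 < ν₀ ∧ ν₀ ≤ ν₁ ∧
      ∀ v : EuclideanSpace ℝ (Fin 3), ν₀ ≤ collFreq v ∧ collFreq v ≤ ν₁ := by
  refine ⟨4 * π * ∫ u : EuclideanSpace ℝ (Fin 3), CollFreqAux.Cfun u,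
    4 * π * (6 * ∫ u : EuclideanSpace ℝ (Fin 3), Real.exp (-energy u)), ?_, ?_,
    fun v => ⟨CollFreqAux.lower v, CollFreqAux.upper v⟩⟩
  · exact mul_pos (by positivity) CollFreqAux.integral_Cfun_pos
  · exact le_trans (CollFreqAux.lower 0) (CollFreqAux.upper 0)
end

section
/- Let k(v,u) be a measurable kernel on ℝ³×ℝ³ satisfying |k(v,u)| ≤ C₁ e^{-(u₀+v₀)/2} + C₁ (max{u₀,v₀}|u-v|)^{-1} e^{-|u-v|/4}, where u₀ = √(1+|u|²), v₀ = √(1+|v|²). Then for any γ ∈ ℝ there exists C > 0 such that ∫_{ℝ³} |k(v,u)| (1+u₀)^γ du ≤ C (1+v₀)^{γ-1} for all v ∈ ℝ³. -/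
/-!
Peetre's inequality `(1 + u₀)^γ ≤ (1 + v₀)^γ (1 + |u - v|)^{|γ|}` moves the weight from `u`
to `v`. In the singular part of the kernel, `max(u₀, v₀) ≥ (1 + v₀) / 2` gives the gain
`(1 + v₀)^{-1}`, and `e^{-|u - v|/4}` absorbs the factor `(1 + |u - v|)^{|γ|}` with four powers
to spare, leaving `|u - v|^{-1} (1 + |u - v|)^{-4}`, which is integrable on ℝ³. In the other
part, `e^{-u₀/2}` and `e^{-v₀/2}` beat every power of `1 + u₀` and `1 + v₀`.
-/

open MeasureTheory Real

open Set Metric Module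

section Integrability

variable {E : Type*} [NormedAddCommGroup E] [NormedSpace ℝ E] [FiniteDimensional ℝ E]
  [MeasurableSpace E] [BorelSpace E] {μ : Measure E} [μ.IsAddHaarMeasure]

theorem integrable_inv_norm_mul_one_add_norm_rpow_neg (hd : 1 < finrank ℝ E) {r : ℝ}
    (hr : (finrank ℝ E : ℝ) < r) :
    Integrable (fun x : E => ‖x‖⁻¹ * (1 + ‖x‖) ^ (-r)) μ := by
  have hr0 : 0 ≤ r := by linarith [(Nat.cast_nonneg (finrank ℝ E) : (0 : ℝ) ≤ _)]
  have hmeas : AEStronglyMeasurable (fun x : E => ‖x‖⁻¹ * (1 + ‖x‖) ^ (-r)) μ := by fun_prop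
  have hball : IntegrableOn (fun x : E => ‖x‖⁻¹ * (1 + ‖x‖) ^ (-r)) (ball 0 1) μ := by
    refine integrableOn_ball_of_norm_le_rpow (C := 1) (α := 1) hd.le (by exact_mod_cast hd)
      (ae_of_all _ fun x => ?_) hmeas
    rw [Real.norm_of_nonneg (by positivity), one_mul, rpow_neg_one]
    exact mul_le_of_le_one_right (by positivity)
      (rpow_le_one_of_one_le_of_nonpos (by linarith [norm_nonneg x]) (by linarith))
  have hcompl : IntegrableOn (fun x : E => ‖x‖⁻¹ * (1 + ‖x‖) ^ (-r)) (ball 0 1)ᶜ μ := by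
    refine (integrable_one_add_norm hr).integrableOn.mono' hmeas.restrict
      ((ae_restrict_iff' measurableSet_ball.compl).2 (ae_of_all _ fun x hx => ?_))
    have hx1 : 1 ≤ ‖x‖ := by simpa using hx
    rw [Real.norm_of_nonneg (by positivity)]
    exact mul_le_of_le_one_left (by positivity) (inv_le_one_of_one_le₀ hx1)
  rw [← integrableOn_univ, ← union_compl_self (ball (0 : E) 1)]
  exact hball.union hcompl

end Integrability

theorem exists_one_add_rpow_mul_exp_neg_le (Q : ℝ) {c : ℝ} (hc : 0 < c) :
    ∃ M > 0, ∀ q ≤ Q, ∀ t, 0 ≤ t → (1 + t) ^ q * exp (-t / c) ≤ M := by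
  set K := max 1 (c * |Q|)
  have hK : 0 < K := lt_of_lt_of_le one_pos (le_max_left _ _)
  refine ⟨K ^ |Q|, by positivity, fun q hq t ht => ?_⟩
  -- `K` is chosen so that `1 + t ≤ K * exp (t / K)` and `|Q| / K ≤ 1 / c`.
  have hlin : 1 + t ≤ K * exp (t / K) := by
    have := add_one_le_exp (t / K)
    calc 1 + t ≤ K * (t / K + 1) := by field_simp; linarith [le_max_left 1 (c * |Q|)]
      _ ≤ K * exp (t / K) := by gcongr
  have hexp : t / K * |Q| ≤ t / c := by
    rw [div_mul_eq_mul_div, div_le_div_iff₀ hK hc]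
    nlinarith [le_max_right 1 (c * |Q|)]
  calc (1 + t) ^ q * exp (-t / c)
      ≤ (K * exp (t / K)) ^ |Q| * exp (-t / c) := by
        gcongr
        calc (1 + t) ^ q ≤ (1 + t) ^ |Q| :=
              rpow_le_rpow_of_exponent_le (by linarith) (hq.trans (le_abs_self Q))
          _ ≤ (K * exp (t / K)) ^ |Q| := by gcongr
    _ = K ^ |Q| * exp (t / K * |Q| + -t / c) := by
        rw [mul_rpow hK.le (exp_pos _).le, ← exp_mul, mul_assoc, ← exp_add]
    _ ≤ K ^ |Q| := by
        refine mul_le_of_le_one_right (by positivity) (exp_le_one_iff.2 ?_)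
        linarith [neg_div c t]

theorem one_add_rpow_mul_exp_neg_le_mul_rpow {Q c M p r t : ℝ}
    (hM : ∀ q ≤ Q, ∀ t, 0 ≤ t → (1 + t) ^ q * exp (-t / c) ≤ M) (hpr : p - r ≤ Q) (ht : 0 ≤ t) :
    (1 + t) ^ p * exp (-t / c) ≤ M * (1 + t) ^ r := by
  have h : 0 < 1 + t := by linarith
  calc (1 + t) ^ p * exp (-t / c) = (1 + t) ^ (p - r) * exp (-t / c) * (1 + t) ^ r := by
        rw [rpow_sub h]; field_simp
    _ ≤ M * (1 + t) ^ r := by gcongr; exact hM _ hpr t ht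

theorem rpow_le_rpow_mul_rpow_abs {a b d : ℝ} (ha : 0 < a) (hb : 0 < b) (hab : a ≤ b * d)
    (hba : b ≤ a * d) (γ : ℝ) : a ^ γ ≤ b ^ γ * d ^ |γ| := by
  have hd : 0 < d := (mul_pos_iff_of_pos_left hb).1 (ha.trans_le hab)
  have hlog : |log a - log b| ≤ log d := by
    rw [abs_sub_le_iff, sub_le_iff_le_add', sub_le_iff_le_add', ← log_mul ha.ne' hd.ne',
      ← log_mul hb.ne' hd.ne']
    exact ⟨log_le_log ha hab, log_le_log hb hba⟩
  rw [rpow_def_of_pos ha, rpow_def_of_pos hb, rpow_def_of_pos hd, ← exp_add]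
  refine exp_le_exp.2 ?_
  have : (log a - log b) * γ ≤ log d * |γ| :=
    (le_abs_self _).trans (by rw [abs_mul]; gcongr)
  linarith

local notation "ℝ³" => EuclideanSpace ℝ (Fin 3)

theorem one_le_energy (v : ℝ³) : 1 ≤ energy v :=
  one_le_sqrt.2 (by nlinarith [norm_nonneg v])

theorem norm_le_energy (v : ℝ³) : ‖v‖ ≤ energy v :=
  le_sqrt_of_sq_le (by nlinarith)

theorem energy_le_energy_add_norm_sub (u v : ℝ³) : energy u ≤ energy v + ‖u - v‖ := by
  have hv := norm_le_energy v
  have hsq : energy v ^ 2 = 1 + ‖v‖ ^ 2 := sq_sqrt (by positivity)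
  have hu : ‖u‖ ≤ ‖v‖ + ‖u - v‖ := by linarith [norm_sub_norm_le u v]
  refine sqrt_le_iff.2 ⟨by linarith [one_le_energy v, norm_nonneg (u - v)], ?_⟩
  nlinarith [norm_nonneg u, norm_nonneg v, norm_nonneg (u - v)]

theorem one_add_energy_rpow_le (γ : ℝ) (u v : ℝ³) :
    (1 + energy u) ^ γ ≤ (1 + energy v) ^ γ * (1 + ‖u - v‖) ^ |γ| := by
  have hu := one_le_energy u
  have hv := one_le_energy v
  have hd := norm_nonneg (u - v)
  have huv := energy_le_energy_add_norm_sub u v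
  have hvu := energy_le_energy_add_norm_sub v u
  rw [norm_sub_rev] at hvu
  exact rpow_le_rpow_mul_rpow_abs (by linarith) (by linarith) (by nlinarith) (by nlinarith) γ

section KernelMajorant

variable {γ M : ℝ}

theorem exp_neg_energy_mul_weight_le
    (hM : ∀ q ≤ |γ| + 4, ∀ t, 0 ≤ t → (1 + t) ^ q * exp (-t / 4) ≤ M) (hM0 : 0 ≤ M)
    (u v : ℝ³) :
    exp (-(energy u + energy v) / 2) * (1 + energy u) ^ γ ≤
      M ^ 2 * (1 + energy v) ^ (γ - 1) * (1 + ‖u‖) ^ (-4 : ℝ) := by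
  have hu := one_le_energy u
  have hv := one_le_energy v
  have hdecay_u : (1 + energy u) ^ γ * exp (-energy u / 4) ≤ M * (1 + ‖u‖) ^ (-4 : ℝ) :=
    (one_add_rpow_mul_exp_neg_le_mul_rpow (r := -4) hM (by linarith [le_abs_self γ])
      (by linarith)).trans <| mul_le_mul_of_nonneg_left
        (rpow_le_rpow_of_nonpos (by positivity) (by linarith [norm_le_energy u]) (by norm_num)) hM0
  have hdecay_v : exp (-energy v / 4) ≤ M * (1 + energy v) ^ (γ - 1) := by
    simpa using one_add_rpow_mul_exp_neg_le_mul_rpow (p := 0) hM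
      (by linarith [neg_abs_le γ]) (by linarith)
  calc exp (-(energy u + energy v) / 2) * (1 + energy u) ^ γ
      ≤ (1 + energy u) ^ γ * exp (-energy u / 4) * exp (-energy v / 4) := by
        rw [mul_assoc, ← exp_add, mul_comm]
        gcongr
        linarith
    _ ≤ M * (1 + ‖u‖) ^ (-4 : ℝ) * (M * (1 + energy v) ^ (γ - 1)) :=
        mul_le_mul hdecay_u hdecay_v (exp_pos _).le (by positivity)
    _ = M ^ 2 * (1 + energy v) ^ (γ - 1) * (1 + ‖u‖) ^ (-4 : ℝ) := by ring

theorem inv_dist_mul_exp_neg_mul_weight_le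
    (hM : ∀ q ≤ |γ| + 4, ∀ t, 0 ≤ t → (1 + t) ^ q * exp (-t / 4) ≤ M)
    {u v : ℝ³} (huv : u ≠ v) :
    1 / (max (energy u) (energy v) * ‖u - v‖) * exp (-‖u - v‖ / 4) * (1 + energy u) ^ γ ≤
      2 * M * (1 + energy v) ^ (γ - 1) * (‖u - v‖⁻¹ * (1 + ‖u - v‖) ^ (-4 : ℝ)) := by
  have hu := one_le_energy u
  have hv := one_le_energy v
  have hd : 0 < ‖u - v‖ := norm_pos_iff.2 (sub_ne_zero.2 huv)
  have hmax : 1 / (max (energy u) (energy v) * ‖u - v‖) ≤ 2 / (1 + energy v) * ‖u - v‖⁻¹ := by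
    rw [← div_eq_mul_inv, div_div, div_le_div_iff₀ (by positivity) (by positivity)]
    nlinarith [le_max_right (energy u) (energy v)]
  have hdecay : exp (-‖u - v‖ / 4) * (1 + energy u) ^ γ ≤
      (1 + energy v) ^ γ * (M * (1 + ‖u - v‖) ^ (-4 : ℝ)) :=
    calc exp (-‖u - v‖ / 4) * (1 + energy u) ^ γ
        ≤ (1 + energy v) ^ γ * ((1 + ‖u - v‖) ^ |γ| * exp (-‖u - v‖ / 4)) := by
          rw [mul_comm, ← mul_assoc]
          gcongr
          exact one_add_energy_rpow_le γ u v
      _ ≤ (1 + energy v) ^ γ * (M * (1 + ‖u - v‖) ^ (-4 : ℝ)) :=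
          mul_le_mul_of_nonneg_left
            (one_add_rpow_mul_exp_neg_le_mul_rpow hM (by linarith) hd.le) (by positivity)
  calc 1 / (max (energy u) (energy v) * ‖u - v‖) * exp (-‖u - v‖ / 4) * (1 + energy u) ^ γ
      ≤ 2 / (1 + energy v) * ‖u - v‖⁻¹ *
          ((1 + energy v) ^ γ * (M * (1 + ‖u - v‖) ^ (-4 : ℝ))) := by
        rw [mul_assoc]
        gcongr
    _ = 2 * M * (1 + energy v) ^ (γ - 1) * (‖u - v‖⁻¹ * (1 + ‖u - v‖) ^ (-4 : ℝ)) := by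
        rw [rpow_sub_one (by linarith)]
        ring

theorem kernel_bound_mul_weight_le
    (hM : ∀ q ≤ |γ| + 4, ∀ t, 0 ≤ t → (1 + t) ^ q * exp (-t / 4) ≤ M) (hM0 : 0 ≤ M)
    {C₁ : ℝ} (hC₁ : 0 ≤ C₁) {u v : ℝ³} (huv : u ≠ v) :
    (C₁ * exp (-(energy u + energy v) / 2) +
        C₁ / (max (energy u) (energy v) * ‖u - v‖) * exp (-‖u - v‖ / 4)) * (1 + energy u) ^ γ ≤
      (1 + energy v) ^ (γ - 1) * (C₁ * M ^ 2 * (1 + ‖u‖) ^ (-4 : ℝ) +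
        2 * C₁ * M * (‖u - v‖⁻¹ * (1 + ‖u - v‖) ^ (-4 : ℝ))) := by
  have h₁ := mul_le_mul_of_nonneg_left (exp_neg_energy_mul_weight_le hM hM0 u v) hC₁
  have h₂ := mul_le_mul_of_nonneg_left (inv_dist_mul_exp_neg_mul_weight_le hM huv) hC₁
  rw [div_eq_mul_one_div C₁]
  linarith

end KernelMajorant

theorem kernel_weighted_integral_general
    (k : EuclideanSpace ℝ (Fin 3) → EuclideanSpace ℝ (Fin 3) → ℝ)
    (C₁ : ℝ) (hC₁ : 0 < C₁)
    (hbound : ∀ v u : EuclideanSpace ℝ (Fin 3), u ≠ v →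
      |k v u| ≤ C₁ * Real.exp (-(energy u + energy v) / 2) +
        C₁ / (max (energy u) (energy v) * ‖u - v‖) * Real.exp (-‖u - v‖ / 4))
    (γ : ℝ) :
    ∃ C > 0, ∀ v : EuclideanSpace ℝ (Fin 3),
      (∫ u, |k v u| * (1 + energy u) ^ γ) ≤ C * (1 + energy v) ^ (γ - 1) := by
  obtain ⟨M, hM0, hM⟩ := exists_one_add_rpow_mul_exp_neg_le (|γ| + 4) four_pos
  have hdim : finrank ℝ ℝ³ = 3 := finrank_euclideanSpace_fin
  have hdecay : Integrable fun u : ℝ³ => (1 + ‖u‖) ^ (-4 : ℝ) :=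
    integrable_one_add_norm (by norm_num [hdim])
  have hsing : Integrable fun w : ℝ³ => ‖w‖⁻¹ * (1 + ‖w‖) ^ (-4 : ℝ) :=
    integrable_inv_norm_mul_one_add_norm_rpow_neg (by norm_num [hdim]) (by norm_num [hdim])
  set A := C₁ * M ^ 2 * ∫ u : ℝ³, (1 + ‖u‖) ^ (-4 : ℝ)
  set B := 2 * C₁ * M * ∫ w : ℝ³, ‖w‖⁻¹ * (1 + ‖w‖) ^ (-4 : ℝ)
  refine ⟨A + B + 1, by positivity, fun v => ?_⟩
  have hv := one_le_energy v
  have hmajorant : ∀ᵐ u, |k v u| * (1 + energy u) ^ γ ≤ (1 + energy v) ^ (γ - 1) *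
      (C₁ * M ^ 2 * (1 + ‖u‖) ^ (-4 : ℝ) +
        2 * C₁ * M * (‖u - v‖⁻¹ * (1 + ‖u - v‖) ^ (-4 : ℝ))) := by
    filter_upwards [Measure.ae_ne volume v] with u huv
    have hu := one_le_energy u
    exact (mul_le_mul_of_nonneg_right (hbound v u huv) (by positivity)).trans
      (kernel_bound_mul_weight_le hM hM0.le hC₁.le huv)
  calc (∫ u, |k v u| * (1 + energy u) ^ γ)
      ≤ ∫ u, (1 + energy v) ^ (γ - 1) *
          (C₁ * M ^ 2 * (1 + ‖u‖) ^ (-4 : ℝ) +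
            2 * C₁ * M * (‖u - v‖⁻¹ * (1 + ‖u - v‖) ^ (-4 : ℝ))) :=
        integral_mono_of_nonneg (ae_of_all _ fun u => by have := one_le_energy u; positivity)
          (((hdecay.const_mul _).add ((hsing.comp_sub_right v).const_mul _)).const_mul _)
          hmajorant
    _ = (A + B) * (1 + energy v) ^ (γ - 1) := by
        rw [integral_const_mul, integral_add (hdecay.const_mul _)
          ((hsing.comp_sub_right v).const_mul _), integral_const_mul, integral_const_mul,
          integral_sub_right_eq_self (fun w : ℝ³ => ‖w‖⁻¹ * (1 + ‖w‖) ^ (-4 : ℝ)) v, mul_comm]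
    _ ≤ (A + B + 1) * (1 + energy v) ^ (γ - 1) :=
        mul_le_mul_of_nonneg_right (by linarith) (by positivity)

/-- Weighted integrability estimate for the kernel of the compact operator `K`. -/
theorem kernel_weighted_integral
    (k : EuclideanSpace ℝ (Fin 3) → EuclideanSpace ℝ (Fin 3) → ℝ)
    (hk : Measurable (Function.uncurry k)) (C₁ : ℝ) (hC₁ : 0 < C₁)
    (hbound : ∀ v u : EuclideanSpace ℝ (Fin 3), u ≠ v →
      |k v u| ≤ C₁ * Real.exp (-(energy u + energy v) / 2) +
        C₁ / (max (energy u) (energy v) * ‖u - v‖) * Real.exp (-‖u - v‖ / 4))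
    (γ : ℝ) :
    ∃ C > 0, ∀ v : EuclideanSpace ℝ (Fin 3),
      (∫ u, |k v u| * (1 + energy u) ^ γ) ≤ C * (1 + energy v) ^ (γ - 1) :=
  kernel_weighted_integral_general k C₁ hC₁ hbound γ
end

section
/- Let α ≥ 0, D, D₁ > 0, λ ≥ 0 and set D₂ = 12 max{D, D₁} · max{1, λ}. Then there exists C > 0 such that for all t ≥ 0 and x ∈ ℝ³: ∫_{ℝ³} (1+t)^{-α} e^{-|x−y|²/(D(1+t))} e^{-|y|/D₁} dy ≤ C (1+t)^{-α} e^{-3|x|²/(2D₂(1+t))} + C e^{-3(|x|+t)/(2D₂)}. -/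
/-!
Split the integral according to whether `‖y‖ ≤ ‖x‖ / 2`. There `‖x - y‖ ≥ ‖x‖ / 2`, so the
Gaussian factor is at most `exp (-‖x‖² / (4D(1+t)))`; elsewhere half of the weight
`exp (-‖y‖ / D₁)` is at most `exp (-‖x‖ / (4D₁))`, which is bounded by the Gaussian term when
`‖x‖ ≤ 1 + t` and by `exp (-(‖x‖ + t) / (8D₁))` otherwise. What is left are the finite integrals
of `exp (-‖y‖ / c)`.
-/

open MeasureTheory Real

theorem exp_neg_sq_div_mul_exp_neg_div_le {E : Type*} [SeminormedAddCommGroup E] {a c : ℝ}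
    (ha : 0 < a) (hc : 0 < c) (x y : E) :
    exp (-‖x - y‖ ^ 2 / a) * exp (-‖y‖ / c) ≤
      exp (-‖x‖ ^ 2 / (4 * a)) * exp (-‖y‖ / c) + exp (-‖x‖ / (4 * c)) * exp (-‖y‖ / (2 * c)) := by
  rcases le_or_gt ‖y‖ (‖x‖ / 2) with hy | hy
  · have hxy : ‖x‖ / 2 ≤ ‖x - y‖ := by linarith [norm_sub_norm_le x y]
    have hgauss : exp (-‖x - y‖ ^ 2 / a) ≤ exp (-‖x‖ ^ 2 / (4 * a)) := by
      have hsq : ‖x‖ ^ 2 ≤ 4 * ‖x - y‖ ^ 2 := by nlinarith [norm_nonneg x]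
      rw [exp_le_exp, div_le_div_iff₀ ha (by positivity)]
      nlinarith [mul_le_mul_of_nonneg_right hsq ha.le]
    have := mul_le_mul_of_nonneg_right hgauss (exp_nonneg (-‖y‖ / c))
    have : 0 ≤ exp (-‖x‖ / (4 * c)) * exp (-‖y‖ / (2 * c)) := by positivity
    linarith
  · have hgauss : exp (-‖x - y‖ ^ 2 / a) ≤ 1 := by
      rw [exp_le_one_iff, neg_div, neg_nonpos]
      positivity
    have hsplit : exp (-‖y‖ / c) ≤ exp (-‖x‖ / (4 * c)) * exp (-‖y‖ / (2 * c)) := by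
      rw [← exp_add, exp_le_exp]
      field_simp
      linarith
    have := mul_le_mul hgauss hsplit (exp_nonneg _) zero_le_one
    have : 0 ≤ exp (-‖x‖ ^ 2 / (4 * a)) * exp (-‖y‖ / c) := by positivity
    linarith

theorem exp_neg_div_le_exp_neg_sq_div_add_exp_neg_div {c L r t : ℝ} (hc : 0 < c) (hL : 12 * c ≤ L)
    (hr : 0 ≤ r) (ht : 0 ≤ t) :
    exp (-r / (4 * c)) ≤
      exp (-3 * r ^ 2 / (2 * L * (1 + t))) + exp (-3 * (r + t) / (2 * L)) := by
  have hL0 : 0 < L := by linarith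
  rcases le_or_gt r (1 + t) with hrt | hrt
  · have : exp (-r / (4 * c)) ≤ exp (-3 * r ^ 2 / (2 * L * (1 + t))) := by
      rw [exp_le_exp, div_le_div_iff₀ (by positivity) (by positivity)]
      nlinarith [mul_le_mul_of_nonneg_left hrt hr]
    linarith [exp_nonneg (-3 * (r + t) / (2 * L))]
  · have : exp (-r / (4 * c)) ≤ exp (-3 * (r + t) / (2 * L)) := by
      rw [exp_le_exp, div_le_div_iff₀ (by positivity) (by positivity)]
      nlinarith
    linarith [exp_nonneg (-3 * r ^ 2 / (2 * L * (1 + t)))]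

theorem exp_neg_sq_div_le_exp_neg_sq_div {c L τ r : ℝ} (hc : 0 < c) (hτ : 0 < τ) (hL : 6 * c ≤ L) :
    exp (-r ^ 2 / (4 * (c * τ))) ≤ exp (-3 * r ^ 2 / (2 * L * τ)) := by
  rw [exp_le_exp, div_le_div_iff₀ (by positivity) (by nlinarith)]
  nlinarith [mul_le_mul_of_nonneg_right hL (mul_nonneg hτ.le (sq_nonneg r))]

section

variable {E : Type*} [NormedAddCommGroup E] [NormedSpace ℝ E] [FiniteDimensional ℝ E]
  [MeasurableSpace E] [BorelSpace E] (μ : Measure E) [μ.IsAddHaarMeasure]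

theorem integrable_exp_neg_norm_div {c : ℝ} (hc : 0 < c) :
    Integrable (fun y : E ↦ exp (-‖y‖ / c)) μ := by
  cases subsingleton_or_nontrivial E
  · refine (integrable_const (1 : ℝ)).mono' (by fun_prop) (.of_forall fun y ↦ ?_)
    rw [norm_of_nonneg (exp_nonneg _), exp_le_one_iff, neg_div, neg_nonpos]
    positivity
  · rw [integrable_fun_norm_addHaar μ (f := fun r ↦ exp (-r / c))]
    refine (integrableOn_rpow_mul_exp_neg_mul_rpow (s := (Module.finrank ℝ E - 1 : ℕ))
      (by linarith [(Module.finrank ℝ E - 1 : ℕ).cast_nonneg (α := ℝ)]) one_pos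
      (inv_pos.2 hc)).congr_fun (fun r _ ↦ ?_) measurableSet_Ioi
    simp [div_eq_inv_mul]

theorem integral_exp_neg_sq_div_mul_exp_neg_div_le {a c : ℝ} (ha : 0 < a) (hc : 0 < c) (x : E) :
    ∫ y, exp (-‖x - y‖ ^ 2 / a) * exp (-‖y‖ / c) ∂μ ≤
      exp (-‖x‖ ^ 2 / (4 * a)) * ∫ y, exp (-‖y‖ / c) ∂μ +
        exp (-‖x‖ / (4 * c)) * ∫ y, exp (-‖y‖ / (2 * c)) ∂μ := by
  have h₁ := (integrable_exp_neg_norm_div μ hc).const_mul (exp (-‖x‖ ^ 2 / (4 * a)))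
  have h₂ := (integrable_exp_neg_norm_div μ (by positivity : 0 < 2 * c)).const_mul
    (exp (-‖x‖ / (4 * c)))
  have hint : Integrable (fun y ↦ exp (-‖x - y‖ ^ 2 / a) * exp (-‖y‖ / c)) μ := by
    refine (integrable_exp_neg_norm_div μ hc).bdd_mul (c := 1) (by fun_prop) (.of_forall fun y ↦ ?_)
    rw [norm_of_nonneg (exp_nonneg _), exp_le_one_iff, neg_div, neg_nonpos]
    positivity
  rw [← integral_const_mul, ← integral_const_mul, ← integral_add h₁ h₂]
  exact integral_mono hint (h₁.add h₂) fun y ↦ exp_neg_sq_div_mul_exp_neg_div_le ha hc x y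

end

theorem diffusion_conv_exp_general (α D D₁ lam : ℝ) (hα : 0 ≤ α) (hD : 0 < D) (hD₁ : 0 < D₁) :
    ∃ C > 0, ∀ t : ℝ, 0 ≤ t → ∀ x : EuclideanSpace ℝ (Fin 3),
      (∫ y : EuclideanSpace ℝ (Fin 3),
          (1 + t) ^ (-α) * Real.exp (-‖x - y‖ ^ 2 / (D * (1 + t))) * Real.exp (-‖y‖ / D₁))
        ≤ C * (1 + t) ^ (-α) *
            Real.exp (-3 * ‖x‖ ^ 2 / (2 * (12 * max D D₁ * max 1 lam) * (1 + t)))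
          + C * Real.exp (-3 * (‖x‖ + t) / (2 * (12 * max D D₁ * max 1 lam))) := by
  set L := 12 * max D D₁ * max 1 lam
  have hL : ∀ c ≤ max D D₁, 12 * c ≤ L := fun c hc ↦ by
    nlinarith [le_max_left 1 lam, le_max_left D D₁]
  set I₁ := ∫ y : EuclideanSpace ℝ (Fin 3), exp (-‖y‖ / D₁)
  set I₂ := ∫ y : EuclideanSpace ℝ (Fin 3), exp (-‖y‖ / (2 * D₁))
  have hI₁ : 0 ≤ I₁ := integral_nonneg fun _ ↦ exp_nonneg _
  have hI₂ : 0 ≤ I₂ := integral_nonneg fun _ ↦ exp_nonneg _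
  refine ⟨I₁ + I₂ + 1, by positivity, fun t ht x ↦ ?_⟩
  have hτ : 0 < 1 + t := by linarith
  have hdecay : (1 + t) ^ (-α) ≤ 1 :=
    rpow_le_one_of_one_le_of_nonpos (by linarith) (neg_nonpos.2 hα)
  set G := exp (-3 * ‖x‖ ^ 2 / (2 * L * (1 + t)))
  set G₂ := exp (-3 * (‖x‖ + t) / (2 * L))
  calc _ = (1 + t) ^ (-α) *
        ∫ y : EuclideanSpace ℝ (Fin 3), exp (-‖x - y‖ ^ 2 / (D * (1 + t))) * exp (-‖y‖ / D₁) := by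
        simp_rw [mul_assoc]
        exact integral_const_mul _ _
    _ ≤ (1 + t) ^ (-α) *
        (exp (-‖x‖ ^ 2 / (4 * (D * (1 + t)))) * I₁ + exp (-‖x‖ / (4 * D₁)) * I₂) := by
        gcongr
        exact integral_exp_neg_sq_div_mul_exp_neg_div_le volume (by positivity) hD₁ x
    _ ≤ (1 + t) ^ (-α) * (G * I₁ + (G + G₂) * I₂) := by
        gcongr
        · exact exp_neg_sq_div_le_exp_neg_sq_div hD hτ (by linarith [hL D (le_max_left _ _)])
        · exact exp_neg_div_le_exp_neg_sq_div_add_exp_neg_div hD₁ (hL D₁ (le_max_right _ _))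
            (norm_nonneg x) ht
    _ = (I₁ + I₂) * (1 + t) ^ (-α) * G + ((1 + t) ^ (-α) * I₂) * G₂ := by ring
    _ ≤ _ := by
        have hI₂C : (1 + t) ^ (-α) * I₂ ≤ I₁ + I₂ + 1 := by nlinarith
        exact add_le_add (by gcongr ?_ * _ * _; linarith)
          (mul_le_mul_of_nonneg_right hI₂C (exp_nonneg _))

/-- Convolution of a diffusion wave with an exponentially localized profile. -/
theorem diffusion_conv_exp (α D D₁ lam : ℝ) (hα : 0 ≤ α) (hD : 0 < D) (hD₁ : 0 < D₁)
    (hlam : 0 ≤ lam) :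
    ∃ C > 0, ∀ t : ℝ, 0 ≤ t → ∀ x : EuclideanSpace ℝ (Fin 3),
      (∫ y : EuclideanSpace ℝ (Fin 3),
          (1 + t) ^ (-α) * Real.exp (-‖x - y‖ ^ 2 / (D * (1 + t))) * Real.exp (-‖y‖ / D₁))
        ≤ C * (1 + t) ^ (-α) *
            Real.exp (-3 * ‖x‖ ^ 2 / (2 * (12 * max D D₁ * max 1 lam) * (1 + t)))
          + C * Real.exp (-3 * (‖x‖ + t) / (2 * (12 * max D D₁ * max 1 lam))) :=
  diffusion_conv_exp_general α D D₁ lam hα hD hD₁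
end

section
/- Let α ≥ 0, D, D₁ > 0, λ > 0 and set D₂ = 12 max{D, D₁} · max{1, λ}. Then there exists C > 0 such that for all t ≥ 0 and x ∈ ℝ³: ∫_{ℝ³} (1+t)^{-α} e^{-(|x−y|−λt)²/(D(1+t))} e^{-|y|/D₁} dy ≤ C (1+t)^{-α} e^{-3(|x|−λt)²/(2D₂(1+t))} + C e^{-3(|x|+t)/(2D₂)}. -/
open MeasureTheory Real Filter

lemma huygens_exp_integrable (b : ℝ) (hb : 0 < b) :
    Integrable (fun y : EuclideanSpace ℝ (Fin 3) => Real.exp (-‖y‖ / b)) := by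
  have h4 : ((Module.finrank ℝ (EuclideanSpace ℝ (Fin 3))) : ℝ) < 4 := by
    simp [finrank_euclideanSpace]; norm_num
  set C : ℝ := (max 1 (4*b))^4 with hC
  refine ((integrable_one_add_norm (r := 4) h4).const_mul C).mono'
    (Continuous.aestronglyMeasurable (by continuity)) (Eventually.of_forall fun y => ?_)
  set r₀ := ‖y‖
  have hr0 : 0 ≤ r₀ := norm_nonneg _
  have e1 : 1 + r₀/(4*b) ≤ Real.exp (r₀/(4*b)) := by
    linarith [Real.add_one_le_exp (r₀/(4*b))]
  have hq : r₀ / (4*b) * (4*b) = r₀ := div_mul_cancel₀ _ (by positivity)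
  have hmx1 : (1:ℝ) ≤ max 1 (4*b) := le_max_left _ _
  have hmx2 : 4*b ≤ max 1 (4*b) := le_max_right _ _
  have hqn : 0 ≤ r₀/(4*b) := by positivity
  have h2 : 1 + r₀ ≤ max 1 (4*b) * Real.exp (r₀ / (4*b)) := by
    nlinarith [mul_nonneg (le_trans zero_le_one hmx1) (sub_nonneg.2 e1),
      mul_nonneg hqn (sub_nonneg.2 hmx2)]
  have h3 : (1 + r₀)^4 ≤ C * Real.exp (r₀ / b) := by
    calc (1 + r₀)^4 ≤ (max 1 (4*b) * Real.exp (r₀ / (4*b)))^4 :=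
          pow_le_pow_left₀ (by positivity) h2 4
      _ = C * Real.exp (r₀/(4*b))^4 := by rw [mul_pow]
      _ = C * Real.exp (r₀ / b) := by
          rw [← Real.exp_nat_mul]; congr 1; field_simp; ring
  have hnorm : ‖Real.exp (-r₀ / b)‖ = Real.exp (-r₀/b) := by
    rw [Real.norm_eq_abs, abs_of_pos (Real.exp_pos _)]
  rw [hnorm]
  have hrp : C * (1 + r₀) ^ (-(4:ℝ)) = C / (1 + r₀)^(4:ℕ) := by
    rw [Real.rpow_neg (by positivity), ← Real.rpow_natCast (1+r₀) 4, div_eq_mul_inv]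
    norm_num
  rw [hrp, le_div_iff₀ (by positivity)]
  calc Real.exp (-r₀/b) * (1+r₀)^4 ≤ Real.exp (-r₀/b) * (C * Real.exp (r₀/b)) :=
        mul_le_mul_of_nonneg_left h3 (Real.exp_pos _).le
    _ = C := by
        rw [mul_left_comm, ← Real.exp_add, neg_div, neg_add_cancel, Real.exp_zero, mul_one]

set_option maxHeartbeats 1000000 in
lemma huygens_key (D D₁ lam t s a r w : ℝ) (hD : 0 < D) (hD₁ : 0 < D₁) (hlam : 0 < lam)
    (ht : 0 ≤ t) (hr : 0 ≤ r) (htri : |s| ≤ |a| + r)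
    (hw : w ≤ |s| + lam * t + t) :
    Real.exp (-a ^ 2 / (D * (1 + t))) * Real.exp (-r / (2 * D₁)) ≤
      Real.exp (-3 * s ^ 2 / (2 * (12 * max D D₁ * max 1 lam) * (1 + t)))
        + Real.exp (-3 * w / (2 * (12 * max D D₁ * max 1 lam))) := by
  set M := max D D₁ with hM
  set L := max 1 lam with hL
  have hM0 : 0 < M := lt_of_lt_of_le hD (le_max_left _ _)
  have hDM : D ≤ M := le_max_left _ _
  have hD₁M : D₁ ≤ M := le_max_right _ _
  have hL1 : (1:ℝ) ≤ L := le_max_left _ _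
  have hL0 : (0:ℝ) < L := lt_of_lt_of_le one_pos hL1
  have hlamL : lam ≤ L := le_max_right _ _
  have hT : (0:ℝ) < 1 + t := by linarith
  have hE1 : (0:ℝ) < Real.exp (-3 * s ^ 2 / (2 * (12 * M * L) * (1 + t))) := Real.exp_pos _
  have hE2 : (0:ℝ) < Real.exp (-3 * w / (2 * (12 * M * L))) := Real.exp_pos _
  have hexp1 : Real.exp (-r / (2 * D₁)) ≤ 1 := by
    rw [Real.exp_le_one_iff]
    have : 0 ≤ r / (2 * D₁) := by positivity
    rw [neg_div]; linarith
  rcases le_or_gt (2 * r) |s| with hcase | hcase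
  · -- |a| is large
    have hs4 : s ^ 2 ≤ 4 * a ^ 2 := by
      nlinarith [sq_abs s, sq_abs a, abs_nonneg s, abs_nonneg a]
    have key : -a ^ 2 / (D * (1 + t)) ≤ -3 * s ^ 2 / (2 * (12 * M * L) * (1 + t)) := by
      have h1 : 3 * s ^ 2 / (2 * (12 * M * L) * (1 + t)) ≤ a ^ 2 / (D * (1 + t)) := by
        rw [div_le_div_iff₀ (by positivity) (by positivity)]
        have h3D : (0:ℝ) ≤ 3 * D := by linarith
        have h2ML : D ≤ 2 * (M * L) := by nlinarith
        nlinarith [mul_nonneg (mul_nonneg h3D hT.le) (sub_nonneg.2 hs4),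
          mul_nonneg (mul_nonneg (sq_nonneg a) hT.le) (sub_nonneg.2 h2ML)]
      have e1 : -a ^ 2 / (D * (1 + t)) = -(a ^ 2 / (D * (1 + t))) := by ring
      have e2 : -3 * s ^ 2 / (2 * (12 * M * L) * (1 + t))
          = -(3 * s ^ 2 / (2 * (12 * M * L) * (1 + t))) := by ring
      rw [e1, e2]; linarith
    calc Real.exp (-a ^ 2 / (D * (1 + t))) * Real.exp (-r / (2 * D₁))
        ≤ Real.exp (-a ^ 2 / (D * (1 + t))) * 1 :=
          mul_le_mul_of_nonneg_left hexp1 (Real.exp_pos _).le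
      _ = Real.exp (-a ^ 2 / (D * (1 + t))) := mul_one _
      _ ≤ Real.exp (-3 * s ^ 2 / (2 * (12 * M * L) * (1 + t))) := Real.exp_le_exp.2 key
      _ ≤ _ := le_add_of_nonneg_right hE2.le
  · -- r is large
    have hexp0 : Real.exp (-a ^ 2 / (D * (1 + t))) ≤ 1 := by
      rw [Real.exp_le_one_iff]
      have h0 : 0 ≤ a ^ 2 / (D * (1 + t)) := by positivity
      have : -a ^ 2 / (D * (1 + t)) = -(a ^ 2 / (D * (1 + t))) := by ring
      rw [this]; linarith
    rcases le_or_gt |s| (2 * L * (1 + t)) with hsml | hsml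
    · -- first term dominates
      have key : -r / (2 * D₁) ≤ -3 * s ^ 2 / (2 * (12 * M * L) * (1 + t)) := by
        have h1 : 3 * s ^ 2 / (2 * (12 * M * L) * (1 + t)) ≤ r / (2 * D₁) := by
          rw [div_le_div_iff₀ (by positivity) (by positivity)]
          have hss : |s| * |s| ≤ (2 * r) * (2 * L * (1 + t)) :=
            mul_le_mul hcase.le hsml (abs_nonneg s) (by positivity)
          have hss' : s ^ 2 ≤ 4 * (r * (L * (1 + t))) := by
            nlinarith [hss, abs_mul_abs_self s]
          nlinarith [mul_nonneg hD₁.le (sub_nonneg.2 hss'),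
            mul_nonneg (mul_nonneg hr (mul_nonneg hL0.le hT.le)) (sub_nonneg.2 hD₁M)]
        have e1 : -r / (2 * D₁) = -(r / (2 * D₁)) := by ring
        have e2 : -3 * s ^ 2 / (2 * (12 * M * L) * (1 + t))
            = -(3 * s ^ 2 / (2 * (12 * M * L) * (1 + t))) := by ring
        rw [e1, e2]; linarith
      calc Real.exp (-a ^ 2 / (D * (1 + t))) * Real.exp (-r / (2 * D₁))
          ≤ 1 * Real.exp (-r / (2 * D₁)) :=
            mul_le_mul_of_nonneg_right hexp0 (Real.exp_pos _).le
        _ = Real.exp (-r / (2 * D₁)) := one_mul _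
        _ ≤ Real.exp (-3 * s ^ 2 / (2 * (12 * M * L) * (1 + t))) := Real.exp_le_exp.2 key
        _ ≤ _ := le_add_of_nonneg_right hE2.le
    · -- second term dominates
      have hp1 : lam * t ≤ L * t := mul_le_mul_of_nonneg_right hlamL ht
      have hp2 : t ≤ L * t := by nlinarith [mul_nonneg (sub_nonneg.2 hL1) ht]
      have hexpand : 2 * L * (1 + t) = 2 * L + 2 * (L * t) := by ring
      have hw4 : w ≤ 4 * r := by
        have h2s : w ≤ 2 * |s| := by
          rw [hexpand] at hsml
          linarith
        linarith
      have key : -r / (2 * D₁) ≤ -3 * w / (2 * (12 * M * L)) := by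
        have hD₁ML : D₁ ≤ M * L := le_trans hD₁M (le_mul_of_one_le_right hM0.le hL1)
        have h1 : 3 * w / (2 * (12 * M * L)) ≤ r / (2 * D₁) := by
          rw [div_le_div_iff₀ (by positivity) (by positivity)]
          nlinarith [mul_nonneg hD₁.le (sub_nonneg.2 hw4), mul_nonneg hr (sub_nonneg.2 hD₁ML)]
        have e1 : -r / (2 * D₁) = -(r / (2 * D₁)) := by ring
        have e2 : -3 * w / (2 * (12 * M * L)) = -(3 * w / (2 * (12 * M * L))) := by ring
        rw [e1, e2]; linarith
      calc Real.exp (-a ^ 2 / (D * (1 + t))) * Real.exp (-r / (2 * D₁))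
          ≤ 1 * Real.exp (-r / (2 * D₁)) :=
            mul_le_mul_of_nonneg_right hexp0 (Real.exp_pos _).le
        _ = Real.exp (-r / (2 * D₁)) := one_mul _
        _ ≤ Real.exp (-3 * w / (2 * (12 * M * L))) := Real.exp_le_exp.2 key
        _ ≤ _ := le_add_of_nonneg_left hE1.le

/-- Convolution of a Huygens wave with an exponentially localized profile. -/
theorem huygens_conv_exp (α D D₁ lam : ℝ) (hα : 0 ≤ α) (hD : 0 < D) (hD₁ : 0 < D₁)
    (hlam : 0 < lam) :
    ∃ C > 0, ∀ t : ℝ, 0 ≤ t → ∀ x : EuclideanSpace ℝ (Fin 3),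
      (∫ y : EuclideanSpace ℝ (Fin 3),
          (1 + t) ^ (-α) * Real.exp (-(‖x - y‖ - lam * t) ^ 2 / (D * (1 + t))) *
            Real.exp (-‖y‖ / D₁))
        ≤ C * (1 + t) ^ (-α) *
            Real.exp (-3 * (‖x‖ - lam * t) ^ 2 / (2 * (12 * max D D₁ * max 1 lam) * (1 + t)))
          + C * Real.exp (-3 * (‖x‖ + t) / (2 * (12 * max D D₁ * max 1 lam))) := by
  have hb : (0:ℝ) < 2 * D₁ := by linarith
  have hint := huygens_exp_integrable (2 * D₁) hb
  set K : ℝ := ∫ y : EuclideanSpace ℝ (Fin 3), Real.exp (-‖y‖ / (2 * D₁)) with hKdef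
  have hK0 : 0 ≤ K := integral_nonneg fun y => (Real.exp_pos _).le
  refine ⟨K + 1, by linarith, fun t ht x => ?_⟩
  have hT : (0:ℝ) < 1 + t := by linarith
  set p : ℝ := (1 + t) ^ (-α) with hpdef
  have hp0 : 0 ≤ p := Real.rpow_nonneg (by linarith) _
  have hp1 : p ≤ 1 := Real.rpow_le_one_of_one_le_of_nonpos (by linarith) (by linarith)
  set E1 : ℝ := Real.exp (-3 * (‖x‖ - lam * t) ^ 2 /
    (2 * (12 * max D D₁ * max 1 lam) * (1 + t))) with hE1def
  set E2 : ℝ := Real.exp (-3 * (‖x‖ + t) / (2 * (12 * max D D₁ * max 1 lam))) with hE2def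
  have hE1 : 0 < E1 := Real.exp_pos _
  have hE2 : 0 < E2 := Real.exp_pos _
  have hbound : (∫ y : EuclideanSpace ℝ (Fin 3),
      p * Real.exp (-(‖x - y‖ - lam * t) ^ 2 / (D * (1 + t))) * Real.exp (-‖y‖ / D₁))
      ≤ (p * (E1 + E2)) * K := by
    have hmono := integral_mono_of_nonneg
      (f := fun y : EuclideanSpace ℝ (Fin 3) =>
        p * Real.exp (-(‖x - y‖ - lam * t) ^ 2 / (D * (1 + t))) * Real.exp (-‖y‖ / D₁))
      (g := fun y : EuclideanSpace ℝ (Fin 3) =>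
        (p * (E1 + E2)) * Real.exp (-‖y‖ / (2 * D₁)))
      (Eventually.of_forall fun y => by positivity)
      (hint.const_mul _)
      (Eventually.of_forall fun y => ?_)
    · simp only [integral_const_mul] at hmono; exact hmono
    · have hsplit : Real.exp (-‖y‖ / D₁)
          = Real.exp (-‖y‖ / (2 * D₁)) * Real.exp (-‖y‖ / (2 * D₁)) := by
        rw [← Real.exp_add]; congr 1; field_simp; ring
      have htri : |‖x‖ - lam * t| ≤ |‖x - y‖ - lam * t| + ‖y‖ := by
        have h := abs_norm_sub_norm_le x (x - y)
        have h2 : x - (x - y) = y := by abel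
        rw [h2] at h
        calc |‖x‖ - lam * t| = |(‖x - y‖ - lam * t) + (‖x‖ - ‖x - y‖)| := by congr 1; ring
          _ ≤ |‖x - y‖ - lam * t| + |‖x‖ - ‖x - y‖| := abs_add_le _ _
          _ ≤ |‖x - y‖ - lam * t| + ‖y‖ := by linarith
      have hw : ‖x‖ + t ≤ |‖x‖ - lam * t| + lam * t + t := by
        have := le_abs_self (‖x‖ - lam * t); linarith
      have hkey := huygens_key D D₁ lam t (‖x‖ - lam * t) (‖x - y‖ - lam * t) ‖y‖
        (‖x‖ + t) hD hD₁ hlam ht (norm_nonneg y) htri hw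
      rw [← hE1def, ← hE2def] at hkey
      show p * Real.exp (-(‖x - y‖ - lam * t) ^ 2 / (D * (1 + t))) * Real.exp (-‖y‖ / D₁)
        ≤ (p * (E1 + E2)) * Real.exp (-‖y‖ / (2 * D₁))
      rw [hsplit]
      calc p * Real.exp (-(‖x - y‖ - lam * t) ^ 2 / (D * (1 + t))) *
            (Real.exp (-‖y‖ / (2 * D₁)) * Real.exp (-‖y‖ / (2 * D₁)))
          = p * ((Real.exp (-(‖x - y‖ - lam * t) ^ 2 / (D * (1 + t))) *
              Real.exp (-‖y‖ / (2 * D₁))) * Real.exp (-‖y‖ / (2 * D₁))) := by ring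
        _ ≤ p * ((E1 + E2) * Real.exp (-‖y‖ / (2 * D₁))) :=
            mul_le_mul_of_nonneg_left
              (mul_le_mul_of_nonneg_right hkey (Real.exp_pos _).le) hp0
        _ = (p * (E1 + E2)) * Real.exp (-‖y‖ / (2 * D₁)) := by ring
  calc (∫ y : EuclideanSpace ℝ (Fin 3),
        p * Real.exp (-(‖x - y‖ - lam * t) ^ 2 / (D * (1 + t))) * Real.exp (-‖y‖ / D₁))
      ≤ (p * (E1 + E2)) * K := hbound
    _ ≤ (K + 1) * p * E1 + (K + 1) * E2 := by
        nlinarith [mul_nonneg (mul_nonneg hK0 hE2.le) (sub_nonneg.2 hp1),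
          mul_nonneg hp0 hE1.le, hE2.le]
end

section
/- Let α ≥ 0, D₁ > 0, λ > 0, and define B_{3/2}(t,r) = (1 + r²/(1+t))^{-3/2}. Then there exists C, D₂ > 0 such that for all t ≥ 0 and x ∈ ℝ³: ∫_{{y : |x−y| ≤ λt}} (1+t)^{-α} B_{3/2}(t,|x−y|) e^{-|y|/D₁} dy ≤ C (1+t)^{-α-3/2} e^{-3(|x|−λt)²/(2D₂(1+t))} + C e^{-3(|x|+t)/(2D₂)} + C (1+t)^{-α} B_{3/2}(t,|x|) 1_{{|x| ≤ λt}}. -/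
/-!
On the cone split `e^{-|y|/D₁}` into two halves. Where `|y| ≤ |x|/2`, the profile
`B(t,|x-y|)` is comparable to `B(t,|x|)` and `|y| ≥ (|x| - λt)₊`; where `|y| > |x|/2`, one half
alone is at most `e^{-|x|/(4D₁)}`. The other half is integrable on `ℝ³`, so the integral is
`≲ (1+t)^{-α} (B(t,|x|) e^{-(|x|-λt)₊/(2D₁)} + e^{-|x|/(4D₁)})`.
Inside the cone both terms are `≲ B(t,|x|)`, since exponentials decay faster than `B`.
Outside it, `e^{-|x|/(4D₁)}` and, when `|x| - λt > 1 + t`, also `e^{-(|x|-λt)/(2D₁)}` are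
`≲ e^{-3(|x|+t)/(2D₂)}`; when `0 < |x| - λt ≤ 1 + t`, `B(t,|x|) ≲ (1+t)^{-3/2}` and
`e^{-(|x|-λt)/(2D₁)}` is below the Gaussian.
-/

open MeasureTheory Real

noncomputable def Bprofile (k t r : ℝ) : ℝ := (1 + r ^ 2 / (1 + t)) ^ (-k)

theorem integrable_exp_neg_mul_norm {E : Type*} [NormedAddCommGroup E] [NormedSpace ℝ E]
    [Nontrivial E] [FiniteDimensional ℝ E] [MeasurableSpace E] [BorelSpace E]
    (μ : Measure E) [μ.IsAddHaarMeasure] {b : ℝ} (hb : 0 < b) :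
    Integrable (fun x : E => exp (-b * ‖x‖)) μ := by
  rw [integrable_fun_norm_addHaar μ (f := fun r => exp (-b * r))]
  refine (integrableOn_rpow_mul_exp_neg_mul_rpow (s := (Module.finrank ℝ E - 1 : ℕ))
    (by linarith [Nat.cast_nonneg (α := ℝ) (Module.finrank ℝ E - 1)]) zero_lt_one hb).congr_fun
    (fun y _ => ?_) measurableSet_Ioi
  simp [Real.rpow_natCast]

theorem one_add_rpow_le_mul_exp {p c : ℝ} (hp : 0 < p) (hc : 0 < c) :
    ∃ C ≥ 1, ∀ r : ℝ, 0 ≤ r → (1 + r) ^ p ≤ C * exp (c * r) := by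
  set K := max 1 (p / c)
  refine ⟨K ^ p, Real.one_le_rpow (le_max_left _ _) hp.le, fun r hr => ?_⟩
  have hK : 1 + r ≤ K * exp (c * r / p) := by
    have hr_le : r ≤ K * (c * r / p) := calc
      r = p / c * (c * r / p) := by field_simp
      _ ≤ K * (c * r / p) := by gcongr; exact le_max_right _ _
    nlinarith [Real.add_one_le_exp (c * r / p), le_max_left 1 (p / c)]
  calc (1 + r) ^ p ≤ (K * exp (c * r / p)) ^ p := by gcongr
    _ = K ^ p * exp (c * r) := by
      rw [Real.mul_rpow (by positivity) (by positivity), ← Real.exp_mul]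
      field_simp

section Bprofile

variable {k t r : ℝ}

theorem Bprofile_pos (ht : 0 ≤ t) : 0 < Bprofile k t r := by
  unfold Bprofile; positivity

theorem Bprofile_le_one (hk : 0 ≤ k) (ht : 0 ≤ t) : Bprofile k t r ≤ 1 :=
  Real.rpow_le_one_of_one_le_of_nonpos (le_add_of_nonneg_right (by positivity)) (by linarith)

theorem Bprofile_le_Bprofile (hk : 0 ≤ k) (ht : 0 ≤ t) {r₁ r₂ : ℝ} (h₀ : 0 ≤ r₁)
    (h : r₁ ≤ r₂) : Bprofile k t r₂ ≤ Bprofile k t r₁ := by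
  unfold Bprofile
  exact Real.rpow_le_rpow_of_nonpos (by positivity) (by gcongr) (by linarith)

theorem Bprofile_le_four_rpow_mul (hk : 0 ≤ k) (ht : 0 ≤ t) (hr : 0 ≤ r) {u : ℝ}
    (hu : r / 2 ≤ u) : Bprofile k t u ≤ 4 ^ k * Bprofile k t r := by
  have hbase : (1 + r ^ 2 / (1 + t)) / 4 ≤ 1 + (r / 2) ^ 2 / (1 + t) := by
    have : 0 ≤ r ^ 2 / (1 + t) := by positivity
    ring_nf; nlinarith
  calc Bprofile k t u ≤ Bprofile k t (r / 2) := Bprofile_le_Bprofile hk ht (by linarith) hu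
    _ ≤ ((1 + r ^ 2 / (1 + t)) / 4) ^ (-k) :=
      Real.rpow_le_rpow_of_nonpos (by positivity) hbase (by linarith)
    _ = 4 ^ k * Bprofile k t r := by
      rw [Bprofile, Real.div_rpow (by positivity) (by norm_num),
        Real.rpow_neg (by norm_num : (0 : ℝ) ≤ 4), div_inv_eq_mul, mul_comm]

theorem Bprofile_le_mul_rpow_of_mul_le (hk : 0 ≤ k) (ht : 0 ≤ t) {lam : ℝ} (hlam : 0 < lam)
    (hr : lam * t ≤ r) :
    Bprofile k t r ≤ (min 1 (lam ^ 2) / 2) ^ (-k) * (1 + t) ^ (-k) := by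
  set c := min 1 (lam ^ 2) / 2 with hc
  have hbase : c * (1 + t) ≤ 1 + r ^ 2 / (1 + t) := by
    -- `(1 + t)² ≤ 2 (1 + t²)`
    have hc_le : c * (1 + t) ^ 2 ≤ 1 + lam ^ 2 * t ^ 2 := by
      have h₀ : 0 ≤ min 1 (lam ^ 2) := by positivity
      have h₁ : min 1 (lam ^ 2) ≤ 1 := min_le_left _ _
      have h₂ : min 1 (lam ^ 2) ≤ lam ^ 2 := min_le_right _ _
      rw [hc]
      nlinarith [mul_nonneg h₀ (sq_nonneg (1 - t)), mul_nonneg (sq_nonneg t) (sub_nonneg.2 h₂)]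
    have hr2 : lam ^ 2 * t ^ 2 ≤ r ^ 2 := by nlinarith [mul_nonneg hlam.le ht]
    rw [← sub_nonneg, show 1 + r ^ 2 / (1 + t) - c * (1 + t)
      = (1 + t + r ^ 2 - c * (1 + t) ^ 2) / (1 + t) by field_simp]
    exact div_nonneg (by nlinarith) (by linarith)
  calc Bprofile k t r ≤ (c * (1 + t)) ^ (-k) :=
        Real.rpow_le_rpow_of_nonpos (by positivity) hbase (by linarith)
    _ = c ^ (-k) * (1 + t) ^ (-k) := Real.mul_rpow (by positivity) (by linarith)

theorem exists_exp_neg_le_mul_Bprofile (hk : 0 < k) {D : ℝ} (hD : 0 < D) :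
    ∃ C ≥ 1, ∀ t r : ℝ, 0 ≤ t → 0 ≤ r → exp (-r / D) ≤ C * Bprofile k t r := by
  obtain ⟨C, hC₁, hC⟩ := one_add_rpow_le_mul_exp (by positivity : 0 < 2 * k) (inv_pos.2 hD)
  refine ⟨C, hC₁, fun t r ht hr => ?_⟩
  have hbase : 1 + r ^ 2 / (1 + t) ≤ (1 + r) ^ 2 := by
    have : r ^ 2 / (1 + t) ≤ r ^ 2 := div_le_self (sq_nonneg r) (by linarith)
    nlinarith
  have hpow : (1 + r ^ 2 / (1 + t)) ^ k ≤ (1 + r) ^ (2 * k) := by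
    rw [Real.rpow_mul (by linarith), Real.rpow_two]
    exact Real.rpow_le_rpow (by positivity) hbase hk.le
  rw [Bprofile, Real.rpow_neg (by positivity), ← div_eq_mul_inv, le_div_iff₀ (by positivity),
    neg_div, Real.exp_neg, div_eq_inv_mul, inv_mul_le_iff₀ (by positivity)]
  exact hpow.trans ((hC r hr).trans_eq (mul_comm _ _))

theorem Bprofile_mul_exp_le {E : Type*} [SeminormedAddCommGroup E] {D L : ℝ} (hk : 0 ≤ k)
    (ht : 0 ≤ t) (hD : 0 < D) {x y : E} (hxy : ‖x - y‖ ≤ L) :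
    Bprofile k t ‖x - y‖ * exp (-‖y‖ / D) ≤
      4 ^ k * Bprofile k t ‖x‖ * exp (-max (‖x‖ - L) 0 / D) + exp (-‖x‖ / (2 * D)) := by
  have htri : ‖x‖ - ‖y‖ ≤ ‖x - y‖ := norm_sub_norm_le x y
  have hB₀ : 0 ≤ Bprofile k t ‖x‖ := (Bprofile_pos ht).le
  rcases le_or_gt ‖y‖ (‖x‖ / 2) with hy | hy
  · have hB : Bprofile k t ‖x - y‖ ≤ 4 ^ k * Bprofile k t ‖x‖ :=
      Bprofile_le_four_rpow_mul hk ht (norm_nonneg x) (by linarith)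
    have hE : exp (-‖y‖ / D) ≤ exp (-max (‖x‖ - L) 0 / D) := by
      gcongr
      exact max_le (by linarith) (norm_nonneg y)
    calc Bprofile k t ‖x - y‖ * exp (-‖y‖ / D)
        ≤ 4 ^ k * Bprofile k t ‖x‖ * exp (-max (‖x‖ - L) 0 / D) := by gcongr
      _ ≤ _ := le_add_of_nonneg_right (exp_pos _).le
  · have hE : exp (-‖y‖ / D) ≤ exp (-‖x‖ / (2 * D)) := by
      rw [exp_le_exp, div_le_div_iff₀ hD (by positivity)]
      nlinarith
    calc Bprofile k t ‖x - y‖ * exp (-‖y‖ / D) ≤ 1 * exp (-‖x‖ / (2 * D)) := by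
          gcongr
          exact Bprofile_le_one hk ht
      _ ≤ _ := by rw [one_mul]; exact le_add_of_nonneg_left (by positivity)

theorem setIntegral_Bprofile_mul_exp_le {E : Type*} [NormedAddCommGroup E] [NormedSpace ℝ E]
    [Nontrivial E] [FiniteDimensional ℝ E] [MeasurableSpace E] [BorelSpace E]
    (μ : Measure E) [μ.IsAddHaarMeasure] {D : ℝ} (hk : 0 ≤ k) (ht : 0 ≤ t) (hD : 0 < D)
    (L : ℝ) (x : E) :
    ∫ y in {y | ‖x - y‖ ≤ L}, Bprofile k t ‖x - y‖ * exp (-‖y‖ / D) ∂μ ≤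
      (4 ^ k * Bprofile k t ‖x‖ * exp (-max (‖x‖ - L) 0 / (2 * D))
        + exp (-‖x‖ / (2 * (2 * D)))) * ∫ y, exp (-‖y‖ / (2 * D)) ∂μ := by
  set A := 4 ^ k * Bprofile k t ‖x‖ * exp (-max (‖x‖ - L) 0 / (2 * D))
    + exp (-‖x‖ / (2 * (2 * D)))
  have hA : 0 ≤ A := by have := Bprofile_pos (k := k) (r := ‖x‖) ht; positivity
  have hint : Integrable (fun y : E => exp (-‖y‖ / (2 * D))) μ := by
    refine (integrable_exp_neg_mul_norm μ (inv_pos.2 (by positivity : 0 < 2 * D))).congr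
      (ae_of_all _ fun y => ?_)
    simp only [neg_mul, div_eq_inv_mul, mul_neg]
  have hsplit (y : E) :
      exp (-‖y‖ / D) = exp (-‖y‖ / (2 * D)) * exp (-‖y‖ / (2 * D)) := by
    rw [← exp_add]; congr 1; field_simp; ring
  have hpt : ∀ y ∈ {y | ‖x - y‖ ≤ L},
      Bprofile k t ‖x - y‖ * exp (-‖y‖ / D) ≤ A * exp (-‖y‖ / (2 * D)) := by
    intro y hy
    rw [hsplit, ← mul_assoc]
    gcongr
    exact Bprofile_mul_exp_le hk ht (by positivity) hy
  calc ∫ y in {y | ‖x - y‖ ≤ L}, Bprofile k t ‖x - y‖ * exp (-‖y‖ / D) ∂μ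
      ≤ ∫ y in {y | ‖x - y‖ ≤ L}, A * exp (-‖y‖ / (2 * D)) ∂μ :=
        integral_mono_of_nonneg
          (ae_of_all _ fun y => by
            have := Bprofile_pos (k := k) (r := ‖x - y‖) ht; positivity)
          (hint.const_mul A).integrableOn
          ((ae_restrict_iff' (measurableSet_le (by fun_prop) (by fun_prop))).2 (ae_of_all _ hpt))
    _ ≤ ∫ y, A * exp (-‖y‖ / (2 * D)) ∂μ :=
        setIntegral_le_integral (hint.const_mul A) (ae_of_all _ fun y => by positivity)
    _ = A * ∫ y, exp (-‖y‖ / (2 * D)) ∂μ := integral_const_mul A _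

end Bprofile

section exponents

variable {D D₂ lam t r : ℝ}

theorem exp_neg_div_le_exp_neg_sq_div {d s : ℝ} (hd : 0 ≤ d) (hds : d ≤ s) (hs : 0 < s)
    (hD : 0 < D) (hD₂ : 3 * D ≤ 2 * D₂) :
    exp (-d / D) ≤ exp (-3 * d ^ 2 / (2 * D₂ * s)) := by
  have hD₂₀ : 0 < D₂ := by linarith
  rw [exp_le_exp, div_le_div_iff₀ hD (by positivity)]
  have hd2 : d ^ 2 ≤ d * s := by nlinarith
  nlinarith [mul_le_mul_of_nonneg_left hd2 (by positivity : 0 ≤ 3 * D),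
    mul_le_mul_of_nonneg_right hD₂ (by positivity : 0 ≤ d * s)]

-- `λ (r + t) ≤ (1 + λ) r` outside the cone
theorem exp_neg_div_le_exp_neg_add_div (hr : 0 ≤ r) (hout : lam * t < r) (hlam : 0 < lam)
    (hD : 0 < D) (hD₂ : 3 * D * (1 + lam) ≤ lam * D₂) :
    exp (-r / (2 * D)) ≤ exp (-3 * (r + t) / (2 * D₂)) := by
  have hD₂₀ : 0 < D₂ := by nlinarith
  rw [exp_le_exp, div_le_div_iff₀ (by positivity) (by positivity)]
  have : lam * (3 * D * (r + t)) ≤ lam * (D₂ * r) := by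
    nlinarith [mul_le_mul_of_nonneg_right hD₂ hr]
  nlinarith [le_of_mul_le_mul_left this hlam]

-- `r + t ≤ (2 + λ) (r - λ t)` once `t < r - λ t`
theorem exp_neg_sub_div_le_exp_neg_add_div (ht : 0 ≤ t) (hfar : t < r - lam * t)
    (hlam : 0 < lam) (hD : 0 < D) (hD₂ : 3 * D * (2 + lam) ≤ 2 * D₂) :
    exp (-(r - lam * t) / D) ≤ exp (-3 * (r + t) / (2 * D₂)) := by
  have hD₂₀ : 0 < D₂ := by nlinarith
  rw [exp_le_exp, div_le_div_iff₀ hD (by positivity)]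
  have : r + t ≤ (2 + lam) * (r - lam * t) := by nlinarith
  nlinarith [mul_le_mul_of_nonneg_left this (by positivity : 0 ≤ 3 * D)]

end exponents

noncomputable def coneEnvelope (α lam D₂ t r : ℝ) : ℝ :=
  (1 + t) ^ (-α - 3 / 2) * exp (-3 * (r - lam * t) ^ 2 / (2 * D₂ * (1 + t)))
    + exp (-3 * (r + t) / (2 * D₂))
    + (1 + t) ^ (-α) * Bprofile (3 / 2) t r * (if r ≤ lam * t then 1 else 0)

section coneEnvelope

variable {α lam D₂ t r : ℝ}

theorem gaussian_le_coneEnvelope (ht : 0 ≤ t) :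
    (1 + t) ^ (-α - 3 / 2) * exp (-3 * (r - lam * t) ^ 2 / (2 * D₂ * (1 + t))) ≤
      coneEnvelope α lam D₂ t r := by
  have := Bprofile_pos (k := 3 / 2) (r := r) ht
  unfold coneEnvelope
  split_ifs <;> nlinarith [exp_pos (-3 * (r + t) / (2 * D₂)),
    Real.rpow_nonneg (by linarith : 0 ≤ 1 + t) (-α)]

theorem exp_le_coneEnvelope (ht : 0 ≤ t) :
    exp (-3 * (r + t) / (2 * D₂)) ≤ coneEnvelope α lam D₂ t r := by
  have := Bprofile_pos (k := 3 / 2) (r := r) ht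
  unfold coneEnvelope
  split_ifs <;> nlinarith [exp_pos (-3 * (r - lam * t) ^ 2 / (2 * D₂ * (1 + t))),
    Real.rpow_nonneg (by linarith : 0 ≤ 1 + t) (-α),
    Real.rpow_nonneg (by linarith : 0 ≤ 1 + t) (-α - 3 / 2)]

theorem Bprofile_le_coneEnvelope (ht : 0 ≤ t) (hr : r ≤ lam * t) :
    (1 + t) ^ (-α) * Bprofile (3 / 2) t r ≤ coneEnvelope α lam D₂ t r := by
  unfold coneEnvelope
  rw [if_pos hr, mul_one]
  nlinarith [exp_pos (-3 * (r - lam * t) ^ 2 / (2 * D₂ * (1 + t))),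
    exp_pos (-3 * (r + t) / (2 * D₂)), Real.rpow_nonneg (by linarith : 0 ≤ 1 + t) (-α - 3 / 2)]

theorem coneEnvelope_nonneg (ht : 0 ≤ t) : 0 ≤ coneEnvelope α lam D₂ t r :=
  (exp_pos _).le.trans (exp_le_coneEnvelope ht)

theorem rpow_neg_mul_exp_le_coneEnvelope {D C : ℝ} (hα : 0 ≤ α) (ht : 0 ≤ t) (hr : 0 ≤ r)
    (hlam : 0 < lam) (hD : 0 < D) (hD₂ : 3 * D * (1 + lam) ≤ lam * D₂) (hC₁ : 1 ≤ C)
    (hC : exp (-r / (2 * D)) ≤ C * Bprofile (3 / 2) t r) :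
    (1 + t) ^ (-α) * exp (-r / (2 * D)) ≤ C * coneEnvelope α lam D₂ t r := by
  rcases le_or_gt r (lam * t) with hin | hout
  · calc (1 + t) ^ (-α) * exp (-r / (2 * D))
          ≤ (1 + t) ^ (-α) * (C * Bprofile (3 / 2) t r) := by gcongr
      _ = C * ((1 + t) ^ (-α) * Bprofile (3 / 2) t r) := by ring
      _ ≤ C * coneEnvelope α lam D₂ t r := by
          gcongr; exact Bprofile_le_coneEnvelope ht hin
  · have hA₁ : (1 + t) ^ (-α) ≤ 1 :=
      Real.rpow_le_one_of_one_le_of_nonpos (by linarith) (by linarith)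
    have hE := exp_neg_div_le_exp_neg_add_div hr hout hlam hD hD₂
    calc (1 + t) ^ (-α) * exp (-r / (2 * D)) ≤ 1 * exp (-3 * (r + t) / (2 * D₂)) := by gcongr
      _ ≤ C * coneEnvelope α lam D₂ t r := by
          gcongr
          exact exp_le_coneEnvelope ht

theorem rpow_neg_mul_Bprofile_mul_exp_le_coneEnvelope {D : ℝ} (hα : 0 ≤ α) (ht : 0 ≤ t)
    (hlam : 0 < lam) (hD : 0 < D) (hD₂ : 3 * D * (2 + lam) ≤ 2 * D₂) :
    (1 + t) ^ (-α) * Bprofile (3 / 2) t r * exp (-max (r - lam * t) 0 / D) ≤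
      max 1 ((min 1 (lam ^ 2) / 2) ^ (-(3 / 2 : ℝ))) * coneEnvelope α lam D₂ t r := by
  set c := (min 1 (lam ^ 2) / 2) ^ (-(3 / 2 : ℝ))
  have hA₀ : 0 ≤ (1 + t) ^ (-α) := Real.rpow_nonneg (by linarith) _
  have hB₀ : 0 < Bprofile (3 / 2) t r := Bprofile_pos ht
  have henv := coneEnvelope_nonneg (α := α) (lam := lam) (D₂ := D₂) (r := r) ht
  rcases le_or_gt r (lam * t) with hin | hout
  · rw [max_eq_right (by linarith), neg_zero, zero_div, exp_zero, mul_one]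
    exact (Bprofile_le_coneEnvelope ht hin).trans (le_mul_of_one_le_left henv (le_max_left _ _))
  rw [max_eq_left (by linarith)]
  set d := r - lam * t
  have hd : 0 ≤ d := by linarith
  rcases le_or_gt d (1 + t) with hnear | hfar
  · have hB : Bprofile (3 / 2) t r ≤ c * (1 + t) ^ (-(3 / 2 : ℝ)) :=
      Bprofile_le_mul_rpow_of_mul_le (by norm_num) ht hlam hout.le
    have hE :=
      exp_neg_div_le_exp_neg_sq_div (D₂ := D₂) hd hnear (by linarith) hD (by nlinarith)
    calc (1 + t) ^ (-α) * Bprofile (3 / 2) t r * exp (-d / D)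
        ≤ (1 + t) ^ (-α) * (c * (1 + t) ^ (-(3 / 2 : ℝ))) *
            exp (-3 * d ^ 2 / (2 * D₂ * (1 + t))) := by gcongr
      _ = c * ((1 + t) ^ (-α - 3 / 2) * exp (-3 * d ^ 2 / (2 * D₂ * (1 + t)))) := by
          rw [sub_eq_add_neg, Real.rpow_add (by linarith)]; ring
      _ ≤ max 1 c * coneEnvelope α lam D₂ t r := by
          gcongr
          · exact le_max_right _ _
          · exact gaussian_le_coneEnvelope ht
  · have hA₁ : (1 + t) ^ (-α) ≤ 1 :=
      Real.rpow_le_one_of_one_le_of_nonpos (by linarith) (by linarith)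
    have hE := exp_neg_sub_div_le_exp_neg_add_div (r := r) ht (by linarith) hlam hD hD₂
    calc (1 + t) ^ (-α) * Bprofile (3 / 2) t r * exp (-d / D)
        ≤ 1 * 1 * exp (-3 * (r + t) / (2 * D₂)) := by
          gcongr; exact Bprofile_le_one (by norm_num) ht
      _ = exp (-3 * (r + t) / (2 * D₂)) := by ring
      _ ≤ coneEnvelope α lam D₂ t r := exp_le_coneEnvelope ht
      _ ≤ max 1 c * coneEnvelope α lam D₂ t r := le_mul_of_one_le_left henv (le_max_left _ _)

end coneEnvelope

/-- Convolution of the diffusive profile `B_{3/2}` restricted to the Mach cone with an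
exponentially localized profile. -/
theorem Bprofile_conv_exp (α D₁ lam : ℝ) (hα : 0 ≤ α) (hD₁ : 0 < D₁) (hlam : 0 < lam) :
    ∃ C > 0, ∃ D₂ > 0, ∀ t : ℝ, 0 ≤ t → ∀ x : EuclideanSpace ℝ (Fin 3),
      (∫ y in {y : EuclideanSpace ℝ (Fin 3) | ‖x - y‖ ≤ lam * t},
          (1 + t) ^ (-α) * Bprofile (3 / 2) t ‖x - y‖ * Real.exp (-‖y‖ / D₁))
        ≤ C * (1 + t) ^ (-α - 3 / 2) *
            Real.exp (-3 * (‖x‖ - lam * t) ^ 2 / (2 * D₂ * (1 + t)))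
          + C * Real.exp (-3 * (‖x‖ + t) / (2 * D₂))
          + C * (1 + t) ^ (-α) * Bprofile (3 / 2) t ‖x‖ *
              (if ‖x‖ ≤ lam * t then 1 else 0) := by
  obtain ⟨C₁, hC₁, hexp⟩ := exists_exp_neg_le_mul_Bprofile (k := 3 / 2) (by norm_num)
    (by positivity : 0 < 2 * (2 * D₁))
  obtain ⟨D₂, hD₂, hD₂'⟩ : ∃ D₂, 3 * (2 * D₁) * (2 + lam) ≤ 2 * D₂ ∧
      3 * (2 * D₁) * (1 + lam) ≤ lam * D₂ := by
    refine ⟨3 * D₁ * (1 + lam) * (2 + lam) / lam, ?_, ?_⟩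
    · rw [mul_div_assoc', le_div_iff₀ hlam]
      nlinarith [mul_pos hD₁ (by positivity : 0 < 2 + lam)]
    · rw [mul_div_cancel₀ _ hlam.ne']
      nlinarith [mul_pos hD₁ (by positivity : 0 < 1 + lam)]
  set M := ∫ y : EuclideanSpace ℝ (Fin 3), exp (-‖y‖ / (2 * D₁))
  set c := max 1 ((min 1 (lam ^ 2) / 2) ^ (-(3 / 2 : ℝ)))
  have hM : 0 ≤ M := integral_nonneg fun _ => (exp_pos _).le
  refine ⟨(4 ^ (3 / 2 : ℝ) * c + C₁) * M + 1, by positivity, D₂, by nlinarith,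
    fun t ht x => ?_⟩
  set E := coneEnvelope α lam D₂ t ‖x‖
  have hE : 0 ≤ E := coneEnvelope_nonneg ht
  calc ∫ y in {y | ‖x - y‖ ≤ lam * t},
        (1 + t) ^ (-α) * Bprofile (3 / 2) t ‖x - y‖ * exp (-‖y‖ / D₁)
      = (1 + t) ^ (-α) * ∫ y in {y | ‖x - y‖ ≤ lam * t},
          Bprofile (3 / 2) t ‖x - y‖ * exp (-‖y‖ / D₁) := by
        simp_rw [mul_assoc]; exact integral_const_mul _ _
    _ ≤ (1 + t) ^ (-α) * ((4 ^ (3 / 2 : ℝ) * Bprofile (3 / 2) t ‖x‖ *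
          exp (-max (‖x‖ - lam * t) 0 / (2 * D₁)) + exp (-‖x‖ / (2 * (2 * D₁)))) * M) :=
        mul_le_mul_of_nonneg_left
          (setIntegral_Bprofile_mul_exp_le volume (by norm_num) ht hD₁ _ x)
          (Real.rpow_nonneg (by linarith) _)
    _ = 4 ^ (3 / 2 : ℝ) * M * ((1 + t) ^ (-α) * Bprofile (3 / 2) t ‖x‖ *
          exp (-max (‖x‖ - lam * t) 0 / (2 * D₁)))
        + M * ((1 + t) ^ (-α) * exp (-‖x‖ / (2 * (2 * D₁)))) := by ring
    _ ≤ 4 ^ (3 / 2 : ℝ) * M * (c * E) + M * (C₁ * E) := by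
        gcongr 4 ^ (3 / 2 : ℝ) * M * ?_ + M * ?_
        · exact rpow_neg_mul_Bprofile_mul_exp_le_coneEnvelope hα ht hlam (by positivity) hD₂
        · exact rpow_neg_mul_exp_le_coneEnvelope hα ht (norm_nonneg x) hlam (by positivity)
            hD₂' hC₁ (hexp t ‖x‖ ht (norm_nonneg x))
    _ ≤ ((4 ^ (3 / 2 : ℝ) * c + C₁) * M + 1) * E := by nlinarith
    _ = _ := by unfold E coneEnvelope; ring
end

section
/- Let α, β > 0, D > 0 and D₁ ≥ 16D. Define Γ_γ(t) = ∫₀ᵗ (1+s)^{-γ} ds. Then there exists C > 0 such that for all t ≥ 0 and x ∈ ℝ³: ∫₀ᵗ ∫_{ℝ³} (1+t−s)^{-α} e^{-|x−y|²/(D(1+t−s))} (1+s)^{-β} e^{-2|y|²/(D₁(1+s))} dy ds ≤ C ((1+t)^{-α} Γ_{β−3/2}(t) + (1+t)^{-β} Γ_{α−3/2}(t)) e^{-3|x|²/(2D₁(1+t))}. -/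
open MeasureTheory Real

/-- `Γ_γ(t) = ∫₀ᵗ (1+s)^{-γ} ds`. -/
noncomputable def GammaInt (γ t : ℝ) : ℝ := ∫ s in (0 : ℝ)..t, (1 + s) ^ (-γ)

/-!
Put `A = 1 + t - s`, `B = 1 + s`, `a = 1 / (D A)` and `b = 2 / (D₁ B)`. By the triangle
inequality `a ‖x - y‖² + b ‖y‖² ≥ ab/(a+b) ‖x‖²`, and `D₁ ≥ 16 D` gives
`ab/(a+b) ≥ 16 / (9 D₁ (1 + t))`. Spending `27/32` of the exponent on this bound produces the
factor `exp (-3 ‖x‖² / (2 D₁ (1 + t)))`; the remaining `5/32` still dominates a Gaussian in `y` at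
rate `max a b ≥ 2 / (D₁ min A B)`, so the `y`-integral is `O(min A B ^ (3/2))`. As `A + B ≥ 1 + t`,
the larger of `A`, `B` is at least `(1 + t)/2`, so the `s`-integrand is
`O((1 + t)^{-α} B^{3/2-β} + (1 + t)^{-β} A^{3/2-α})`, which integrates to the two `Γ` terms.
-/

section ParallelSum

variable {E : Type*} [SeminormedAddCommGroup E]

theorem mul_div_add_mul_sq_norm_le {a b : ℝ} (ha : 0 < a) (hb : 0 < b) (x y : E) :
    a * b / (a + b) * ‖x‖ ^ 2 ≤ a * ‖x - y‖ ^ 2 + b * ‖y‖ ^ 2 := by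
  have htri : ‖x‖ ≤ ‖x - y‖ + ‖y‖ := norm_le_norm_sub_add x y
  have hsq : ‖x‖ ^ 2 ≤ (‖x - y‖ + ‖y‖) ^ 2 := pow_le_pow_left₀ (norm_nonneg x) htri 2
  rw [div_mul_eq_mul_div, div_le_iff₀ (by positivity)]
  nlinarith [sq_nonneg (a * ‖x - y‖ - b * ‖y‖), mul_le_mul_of_nonneg_left hsq (mul_pos ha hb).le]

theorem exists_max_mul_sq_norm_sub_le {a b : ℝ} (ha : 0 ≤ a) (hb : 0 ≤ b) (x : E) :
    ∃ z : E, ∀ y, max a b * ‖y - z‖ ^ 2 ≤ a * ‖x - y‖ ^ 2 + b * ‖y‖ ^ 2 := by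
  rcases le_total a b with hab | hba
  · refine ⟨0, fun y => ?_⟩
    rw [max_eq_right hab, sub_zero]
    nlinarith [mul_nonneg ha (sq_nonneg ‖x - y‖)]
  · refine ⟨x, fun y => ?_⟩
    rw [max_eq_left hba, norm_sub_rev]
    nlinarith [mul_nonneg hb (sq_nonneg ‖y‖)]

end ParallelSum

theorem two_div_mul_min_le_max {D D₁ A B : ℝ} (hD : 0 < D) (hD₁ : 2 * D ≤ D₁) (hA : 0 < A) :
    2 / (D₁ * min A B) ≤ max (1 / (D * A)) (2 / (D₁ * B)) := by
  rcases le_total A B with hAB | hBA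
  · rw [min_eq_left hAB]
    refine le_trans ?_ (le_max_left _ _)
    rw [div_le_div_iff₀ (by nlinarith) (by positivity)]
    nlinarith
  · rw [min_eq_right hBA]
    exact le_max_right _ _

theorem rpow_neg_le_two_rpow_mul_rpow_neg {A T α : ℝ} (hT : 0 < T) (hA : T / 2 ≤ A) (hα : 0 ≤ α) :
    A ^ (-α) ≤ 2 ^ α * T ^ (-α) := by
  calc A ^ (-α) ≤ (T / 2) ^ (-α) := rpow_le_rpow_of_nonpos (by positivity) hA (neg_nonpos.mpr hα)
    _ = 2 ^ α * T ^ (-α) := by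
        rw [div_rpow hT.le zero_le_two, rpow_neg zero_le_two, div_inv_eq_mul, mul_comm]

theorem rpow_neg_mul_rpow_neg_mul_min_rpow_le {A B T α β : ℝ} (γ : ℝ) (hA : 0 < A) (hB : 0 < B)
    (hT : 0 < T) (hABT : T ≤ A + B) (hα : 0 ≤ α) (hβ : 0 ≤ β) :
    A ^ (-α) * B ^ (-β) * min A B ^ γ ≤
      2 ^ (α + β) * (T ^ (-α) * B ^ (-(β - γ)) + T ^ (-β) * A ^ (-(α - γ))) := by
  wlog hBA : B ≤ A generalizing A B α β
  · have h := this hB hA (by linarith) hβ hα (le_of_not_ge hBA)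
    rw [min_comm, add_comm β] at h
    linarith
  have hA2 : 2 ^ α * T ^ (-α) ≤ 2 ^ (α + β) * T ^ (-α) := by
    gcongr
    · exact one_le_two
    · linarith
  calc A ^ (-α) * B ^ (-β) * min A B ^ γ = A ^ (-α) * B ^ (-(β - γ)) := by
        rw [min_eq_right hBA, mul_assoc, ← rpow_add hB]
        ring_nf
    _ ≤ 2 ^ (α + β) * T ^ (-α) * B ^ (-(β - γ)) := by
        gcongr
        exact (rpow_neg_le_two_rpow_mul_rpow_neg hT (by linarith) hα).trans hA2
    _ ≤ _ := by
        rw [mul_add, ← mul_assoc]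
        have : 0 ≤ 2 ^ (α + β) * (T ^ (-β) * A ^ (-(α - γ))) := by positivity
        linarith

section Gaussian

variable {V : Type*} [NormedAddCommGroup V] [InnerProductSpace ℝ V] [FiniteDimensional ℝ V]
  [MeasurableSpace V] [BorelSpace V]

theorem integral_exp_neg_mul_norm_sub_sq {c : ℝ} (hc : 0 < c) (z : V) :
    ∫ y : V, rexp (-c * ‖y - z‖ ^ 2) = (π / c) ^ (Module.finrank ℝ V / 2 : ℝ) := by
  rw [integral_sub_right_eq_self (fun y : V => rexp (-c * ‖y‖ ^ 2)) z,
    GaussianFourier.integral_rexp_neg_mul_sq_norm hc]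

theorem integrable_exp_neg_mul_norm_sub_sq {c : ℝ} (hc : 0 < c) (z : V) :
    Integrable (fun y : V => rexp (-c * ‖y - z‖ ^ 2)) :=
  Integrable.of_integral_ne_zero <| by
    rw [integral_exp_neg_mul_norm_sub_sq hc z]
    exact (rpow_pos_of_pos (div_pos pi_pos hc) _).ne'

theorem integral_exp_mul_exp_le {a b ε : ℝ} (ha : 0 < a) (hb : 0 < b) (hε : 0 < ε) (hε₁ : ε ≤ 1)
    (x : V) :
    ∫ y : V, rexp (-a * ‖x - y‖ ^ 2) * rexp (-b * ‖y‖ ^ 2) ≤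
      rexp (-((1 - ε) * (a * b / (a + b))) * ‖x‖ ^ 2) *
        (π / (ε * max a b)) ^ (Module.finrank ℝ V / 2 : ℝ) := by
  obtain ⟨z, hz⟩ := exists_max_mul_sq_norm_sub_le ha.le hb.le x
  have hc : 0 < ε * max a b := mul_pos hε (lt_max_of_lt_left ha)
  have hpoint : ∀ y : V, rexp (-a * ‖x - y‖ ^ 2) * rexp (-b * ‖y‖ ^ 2) ≤
      rexp (-((1 - ε) * (a * b / (a + b))) * ‖x‖ ^ 2) * rexp (-(ε * max a b) * ‖y - z‖ ^ 2) := by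
    intro y
    rw [← exp_add, ← exp_add, exp_le_exp]
    nlinarith [mul_le_mul_of_nonneg_left (mul_div_add_mul_sq_norm_le ha hb x y)
      (sub_nonneg.mpr hε₁), mul_le_mul_of_nonneg_left (hz y) hε.le]
  calc ∫ y : V, rexp (-a * ‖x - y‖ ^ 2) * rexp (-b * ‖y‖ ^ 2)
      ≤ ∫ y : V, rexp (-((1 - ε) * (a * b / (a + b))) * ‖x‖ ^ 2) *
          rexp (-(ε * max a b) * ‖y - z‖ ^ 2) :=
        integral_mono_of_nonneg (.of_forall fun y => by positivity)
          ((integrable_exp_neg_mul_norm_sub_sq hc z).const_mul _) (.of_forall hpoint)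
    _ = _ := by rw [integral_const_mul, integral_exp_neg_mul_norm_sub_sq hc z]

theorem integral_heat_mul_heat_le {D D₁ A B T α β : ℝ} (hD : 0 < D) (hD₁ : 16 * D ≤ D₁)
    (hA : 0 < A) (hB : 0 < B) (hAT : A ≤ T) (hBT : B ≤ T) (x : V) :
    ∫ y : V, A ^ (-α) * rexp (-‖x - y‖ ^ 2 / (D * A)) *
        (B ^ (-β) * rexp (-2 * ‖y‖ ^ 2 / (D₁ * B))) ≤
      (16 * π * D₁ / 5) ^ (Module.finrank ℝ V / 2 : ℝ) *
        (A ^ (-α) * B ^ (-β) * min A B ^ (Module.finrank ℝ V / 2 : ℝ)) *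
        rexp (-3 * ‖x‖ ^ 2 / (2 * D₁ * T)) := by
  have hD₁pos : 0 < D₁ := by linarith
  set a := 1 / (D * A) with ha_def
  set b := 2 / (D₁ * B) with hb_def
  have ha : 0 < a := by positivity
  have hb : 0 < b := by positivity
  have hT : 0 < T := hA.trans_le hAT
  have hmin : 0 < min A B := lt_min hA hB
  have hmax : 2 / (D₁ * min A B) ≤ max a b :=
    two_div_mul_min_le_max hD (by linarith) hA
  have hwidth : π / (5 / 32 * max a b) ≤ 16 * π * D₁ / 5 * min A B := by
    calc π / (5 / 32 * max a b) ≤ π / (5 / 32 * (2 / (D₁ * min A B))) := by gcongr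
      _ = 16 * π * D₁ / 5 * min A B := by field_simp; ring
  have hparallel : a * b / (a + b) = 1 / (D * A + D₁ * B / 2) := by
    rw [ha_def, hb_def]; field_simp; ring
  have hdecay : 3 / (2 * D₁ * T) ≤ (1 - 5 / 32) * (a * b / (a + b)) := by
    rw [hparallel]
    field_simp
    nlinarith [mul_le_mul_of_nonneg_left hAT hD.le, mul_le_mul_of_nonneg_left hBT hD₁pos.le,
      mul_le_mul_of_nonneg_right hD₁ hA.le]
  have hintegrand : ∀ y : V, A ^ (-α) * rexp (-‖x - y‖ ^ 2 / (D * A)) *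
      (B ^ (-β) * rexp (-2 * ‖y‖ ^ 2 / (D₁ * B))) =
      A ^ (-α) * B ^ (-β) * (rexp (-a * ‖x - y‖ ^ 2) * rexp (-b * ‖y‖ ^ 2)) := by
    intro y
    rw [ha_def, hb_def]
    ring_nf
  simp_rw [hintegrand]
  rw [integral_const_mul]
  calc A ^ (-α) * B ^ (-β) * ∫ y : V, rexp (-a * ‖x - y‖ ^ 2) * rexp (-b * ‖y‖ ^ 2)
      ≤ A ^ (-α) * B ^ (-β) * (rexp (-((1 - 5 / 32) * (a * b / (a + b))) * ‖x‖ ^ 2) *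
          (π / (5 / 32 * max a b)) ^ (Module.finrank ℝ V / 2 : ℝ)) := by
        gcongr
        exact integral_exp_mul_exp_le ha hb (by norm_num) (by norm_num) x
    _ ≤ A ^ (-α) * B ^ (-β) * (rexp (-(3 / (2 * D₁ * T)) * ‖x‖ ^ 2) *
          (16 * π * D₁ / 5 * min A B) ^ (Module.finrank ℝ V / 2 : ℝ)) := by
        gcongr
    _ = _ := by
        rw [mul_rpow (by positivity) hmin.le]
        ring_nf

theorem integral_heat_mul_heat_le_add {D D₁ A B T α β : ℝ} (hα : 0 ≤ α) (hβ : 0 ≤ β)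
    (hD : 0 < D) (hD₁ : 16 * D ≤ D₁) (hA : 0 < A) (hB : 0 < B) (hAT : A ≤ T) (hBT : B ≤ T)
    (hTAB : T ≤ A + B) (x : V) :
    ∫ y : V, A ^ (-α) * rexp (-‖x - y‖ ^ 2 / (D * A)) *
        (B ^ (-β) * rexp (-2 * ‖y‖ ^ 2 / (D₁ * B))) ≤
      2 ^ (α + β) * (16 * π * D₁ / 5) ^ (Module.finrank ℝ V / 2 : ℝ) *
        (T ^ (-α) * B ^ (-(β - Module.finrank ℝ V / 2)) +
          T ^ (-β) * A ^ (-(α - Module.finrank ℝ V / 2))) *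
        rexp (-3 * ‖x‖ ^ 2 / (2 * D₁ * T)) := by
  have hD₁pos : 0 < D₁ := by linarith
  have hsplit := rpow_neg_mul_rpow_neg_mul_min_rpow_le (Module.finrank ℝ V / 2 : ℝ) hA hB
    (hA.trans_le hAT) hTAB hα hβ
  calc _ ≤ _ := integral_heat_mul_heat_le hD hD₁ hA hB hAT hBT x
    _ ≤ (16 * π * D₁ / 5) ^ (Module.finrank ℝ V / 2 : ℝ) *
          (2 ^ (α + β) * (T ^ (-α) * B ^ (-(β - Module.finrank ℝ V / 2)) +
            T ^ (-β) * A ^ (-(α - Module.finrank ℝ V / 2)))) *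
          rexp (-3 * ‖x‖ ^ 2 / (2 * D₁ * T)) := by gcongr
    _ = _ := by ring

end Gaussian

theorem intervalIntegrable_one_add_rpow (γ : ℝ) {t : ℝ} (ht : 0 ≤ t) :
    IntervalIntegrable (fun s : ℝ => (1 + s) ^ (-γ)) volume 0 t := by
  refine ContinuousOn.intervalIntegrable (ContinuousOn.rpow_const (by fun_prop) fun s hs => ?_)
  rw [Set.uIcc_of_le ht] at hs
  exact Or.inl (by linarith [hs.1])

theorem intervalIntegrable_one_add_sub_rpow (γ : ℝ) {t : ℝ} (ht : 0 ≤ t) :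
    IntervalIntegrable (fun s : ℝ => (1 + t - s) ^ (-γ)) volume 0 t := by
  simpa only [add_sub_assoc, sub_self, sub_zero] using
    ((intervalIntegrable_one_add_rpow γ ht).comp_sub_left t).symm

theorem integral_one_add_sub_rpow (γ t : ℝ) :
    ∫ s in (0 : ℝ)..t, (1 + t - s) ^ (-γ) = GammaInt γ t := by
  simpa only [GammaInt, add_sub_assoc, sub_self, sub_zero] using
    intervalIntegral.integral_comp_sub_left (fun u => (1 + u) ^ (-γ)) t (a := 0) (b := t)

theorem intervalIntegral.integral_mono_on_of_nonneg {f g : ℝ → ℝ} {a b : ℝ} (hab : a ≤ b)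
    (hg : IntervalIntegrable g volume a b) (hf : ∀ x ∈ Set.Icc a b, 0 ≤ f x)
    (hfg : ∀ x ∈ Set.Icc a b, f x ≤ g x) :
    ∫ x in a..b, f x ≤ ∫ x in a..b, g x := by
  rw [intervalIntegral.integral_of_le hab, intervalIntegral.integral_of_le hab]
  refine integral_mono_of_nonneg ?_ hg.1 ?_
  · exact ae_restrict_of_forall_mem measurableSet_Ioc fun x hx => hf x (Set.Ioc_subset_Icc_self hx)
  · exact ae_restrict_of_forall_mem measurableSet_Ioc fun x hx => hfg x (Set.Ioc_subset_Icc_self hx)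

/-- Nonlinear coupling estimate of two diffusion waves in ℝ³. -/
theorem diffusion_diffusion_coupling (α β D D₁ : ℝ) (hα : 0 < α) (hβ : 0 < β)
    (hD : 0 < D) (hD₁ : 16 * D ≤ D₁) :
    ∃ C > 0, ∀ t : ℝ, 0 ≤ t → ∀ x : EuclideanSpace ℝ (Fin 3),
      (∫ s in (0 : ℝ)..t, ∫ y : EuclideanSpace ℝ (Fin 3),
          (1 + t - s) ^ (-α) * Real.exp (-‖x - y‖ ^ 2 / (D * (1 + t - s))) *
            ((1 + s) ^ (-β) * Real.exp (-2 * ‖y‖ ^ 2 / (D₁ * (1 + s)))))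
        ≤ C * ((1 + t) ^ (-α) * GammaInt (β - 3 / 2) t
              + (1 + t) ^ (-β) * GammaInt (α - 3 / 2) t) *
            Real.exp (-3 * ‖x‖ ^ 2 / (2 * D₁ * (1 + t))) := by
  have hD₁pos : 0 < D₁ := by linarith
  set K := 2 ^ (α + β) * (16 * π * D₁ / 5) ^ ((3 : ℝ) / 2)
  refine ⟨K, by positivity, fun t ht x => ?_⟩
  set G := rexp (-3 * ‖x‖ ^ 2 / (2 * D₁ * (1 + t)))
  have hinner : ∀ s ∈ Set.Icc 0 t,
      ∫ y : EuclideanSpace ℝ (Fin 3),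
          (1 + t - s) ^ (-α) * Real.exp (-‖x - y‖ ^ 2 / (D * (1 + t - s))) *
            ((1 + s) ^ (-β) * Real.exp (-2 * ‖y‖ ^ 2 / (D₁ * (1 + s)))) ≤
        K * ((1 + t) ^ (-α) * (1 + s) ^ (-(β - 3 / 2))
          + (1 + t) ^ (-β) * (1 + t - s) ^ (-(α - 3 / 2))) * G := by
    rintro s ⟨hs₀, hst⟩
    have h := integral_heat_mul_heat_le_add (A := 1 + t - s) (B := 1 + s) (T := 1 + t)
      hα.le hβ.le hD hD₁ (by linarith) (by linarith) (by linarith) (by linarith) (by linarith) x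
    rwa [finrank_euclideanSpace_fin, Nat.cast_ofNat] at h
  have hΓβ := intervalIntegrable_one_add_rpow (β - 3 / 2) ht
  have hΓα := intervalIntegrable_one_add_sub_rpow (α - 3 / 2) ht
  calc _ ≤ ∫ s in (0 : ℝ)..t, K * ((1 + t) ^ (-α) * (1 + s) ^ (-(β - 3 / 2))
          + (1 + t) ^ (-β) * (1 + t - s) ^ (-(α - 3 / 2))) * G := by
        refine intervalIntegral.integral_mono_on_of_nonneg ht
          ((((hΓβ.const_mul _).add (hΓα.const_mul _)).const_mul K).mul_const G) ?_ hinner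
        rintro s ⟨hs₀, hst⟩
        have : 0 < 1 + t - s := by linarith
        exact integral_nonneg fun y => by positivity
    _ = _ := by
        rw [intervalIntegral.integral_mul_const, intervalIntegral.integral_const_mul,
          intervalIntegral.integral_add (hΓβ.const_mul _) (hΓα.const_mul _),
          intervalIntegral.integral_const_mul, intervalIntegral.integral_const_mul,
          integral_one_add_sub_rpow]
        rfl
end

section
/- For n ≥ 1 and any real numbers a ≥ 0 and b ≥ 0, there exists a constant C depending only on n such that ∫_{ℝⁿ} (1 + (|y| − a)²/(1+b))^{-n} dy ≤ C ((1+b)^{n/2} + (1+b)^{1/2} a^{n-1}). -/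
open MeasureTheory Real

/-!
In polar coordinates the integral is `n |B₁| ∫₀^∞ r^(n-1) (1 + ((r - a)/s)²)^(-n) dr` with
`s = √(1 + b)`. Substituting `r = a + s t` gives `|r| ≤ (s + a)(1 + t²)`, so one factor
`(1 + t²)⁻¹` of the profile survives the weight `r^(n-1)`, and the radial integral is at most
`(s + a)^(n-1) ∫ (1 + ((r - a)/s)²)⁻¹ dr = (s + a)^(n-1) s π`.
-/

lemma abs_add_mul_le_mul_one_add_sq {a s : ℝ} (ha : 0 ≤ a) (hs : 0 ≤ s) (t : ℝ) :
    |a + s * t| ≤ (s + a) * (1 + t ^ 2) := by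
  have ht : |t| ≤ 1 + t ^ 2 := by nlinarith [abs_nonneg t, sq_abs t]
  calc |a + s * t| ≤ a + s * |t| := by
        simpa [abs_mul, abs_of_nonneg ha, abs_of_nonneg hs] using abs_add_le a (s * t)
    _ ≤ (s + a) * (1 + t ^ 2) := by nlinarith [sq_nonneg t]

lemma abs_pow_pred_mul_rpow_neg_le_inv_one_add_sq {n : ℕ} (hn : 1 ≤ n) {a s : ℝ} (ha : 0 ≤ a)
    (hs : 0 < s) (r : ℝ) :
    |r| ^ (n - 1) * (1 + (r - a) ^ 2 / s ^ 2) ^ (-(n : ℝ))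
      ≤ (s + a) ^ (n - 1) * (1 + ((r - a) / s) ^ 2)⁻¹ := by
  set t := (r - a) / s
  have hr : r = a + s * t := by simp only [t]; field_simp; ring
  have hq : 0 < 1 + t ^ 2 := by positivity
  have hpow :
      (1 + (r - a) ^ 2 / s ^ 2) ^ (-(n : ℝ)) = ((1 + t ^ 2) ^ (n - 1) * (1 + t ^ 2))⁻¹ := by
    rw [← div_pow, rpow_neg hq.le, rpow_natCast, ← pow_succ, Nat.sub_add_cancel hn]
  calc |r| ^ (n - 1) * (1 + (r - a) ^ 2 / s ^ 2) ^ (-(n : ℝ))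
      ≤ ((s + a) * (1 + t ^ 2)) ^ (n - 1) * ((1 + t ^ 2) ^ (n - 1) * (1 + t ^ 2))⁻¹ := by
        rw [hpow, hr]
        gcongr
        exact abs_add_mul_le_mul_one_add_sq ha hs.le t
    _ = (s + a) ^ (n - 1) * (1 + t ^ 2)⁻¹ := by rw [mul_pow]; field_simp

lemma integrable_inv_one_add_sq_sub_div (a : ℝ) {s : ℝ} (hs : s ≠ 0) :
    Integrable fun r : ℝ => (1 + ((r - a) / s) ^ 2)⁻¹ := by
  simpa [div_eq_mul_inv] using
    (integrable_inv_one_add_sq.comp_mul_right' (inv_ne_zero hs)).comp_sub_right a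

lemma integral_inv_one_add_sq_sub_div (a : ℝ) {s : ℝ} (hs : 0 < s) :
    ∫ r : ℝ, (1 + ((r - a) / s) ^ 2)⁻¹ = s * π := by
  simp_rw [div_eq_mul_inv]
  rw [integral_sub_right_eq_self (fun x : ℝ => (1 + (x * s⁻¹) ^ 2)⁻¹) a,
    Measure.integral_comp_mul_right (fun x : ℝ => (1 + x ^ 2)⁻¹) s⁻¹,
    integral_univ_inv_one_add_sq, inv_inv, abs_of_pos hs, smul_eq_mul]

lemma setIntegral_Ioi_pow_pred_mul_rpow_neg_le {n : ℕ} (hn : 1 ≤ n) {a s : ℝ} (ha : 0 ≤ a)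
    (hs : 0 < s) :
    ∫ r in Set.Ioi (0 : ℝ), r ^ (n - 1) * (1 + (r - a) ^ 2 / s ^ 2) ^ (-(n : ℝ))
      ≤ (s + a) ^ (n - 1) * (s * π) := by
  have hint := (integrable_inv_one_add_sq_sub_div a hs.ne').const_mul ((s + a) ^ (n - 1))
  calc ∫ r in Set.Ioi (0 : ℝ), r ^ (n - 1) * (1 + (r - a) ^ 2 / s ^ 2) ^ (-(n : ℝ))
      ≤ ∫ r in Set.Ioi (0 : ℝ), (s + a) ^ (n - 1) * (1 + ((r - a) / s) ^ 2)⁻¹ := by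
        refine integral_mono_of_nonneg ?_ hint.integrableOn ?_
        all_goals
          filter_upwards [ae_restrict_mem measurableSet_Ioi] with r (hr : 0 < r)
        · positivity
        · simpa [abs_of_pos hr] using abs_pow_pred_mul_rpow_neg_le_inv_one_add_sq hn ha hs r
    _ ≤ ∫ r, (s + a) ^ (n - 1) * (1 + ((r - a) / s) ^ 2)⁻¹ :=
        setIntegral_le_integral hint (.of_forall fun r => by positivity)
    _ = (s + a) ^ (n - 1) * (s * π) := by
        rw [integral_const_mul, integral_inv_one_add_sq_sub_div a hs]

lemma add_pow_pred_mul_le {n : ℕ} (hn : 1 ≤ n) {s a : ℝ} (hs : 0 ≤ s) (ha : 0 ≤ a) :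
    (s + a) ^ (n - 1) * s ≤ 2 ^ (n - 2) * (s ^ n + s * a ^ (n - 1)) := by
  calc (s + a) ^ (n - 1) * s ≤ 2 ^ (n - 1 - 1) * (s ^ (n - 1) + a ^ (n - 1)) * s := by
        gcongr; exact add_pow_le hs ha (n - 1)
    _ = 2 ^ (n - 2) * (s ^ (n - 1) * s + s * a ^ (n - 1)) := by
        rw [Nat.sub_sub]; ring
    _ = 2 ^ (n - 2) * (s ^ n + s * a ^ (n - 1)) := by rw [← pow_succ, Nat.sub_add_cancel hn]

/-- Integral estimate for a polynomially decaying profile concentrated on the sphere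
of radius `a` with spread `√(1+b)`. -/
theorem sphere_profile_integral (n : ℕ) (hn : 1 ≤ n) :
    ∃ C > 0, ∀ a b : ℝ, 0 ≤ a → 0 ≤ b →
      (∫ y : EuclideanSpace ℝ (Fin n), (1 + (‖y‖ - a) ^ 2 / (1 + b)) ^ (-(n : ℝ)))
        ≤ C * ((1 + b) ^ ((n : ℝ) / 2) + (1 + b) ^ ((1 : ℝ) / 2) * a ^ (n - 1)) := by
  have hdim : Module.finrank ℝ (EuclideanSpace ℝ (Fin n)) = n := finrank_euclideanSpace_fin
  have : Nontrivial (EuclideanSpace ℝ (Fin n)) :=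
    Module.nontrivial_of_finrank_pos (R := ℝ) (by rw [hdim]; exact hn)
  set V := volume.real (Metric.ball (0 : EuclideanSpace ℝ (Fin n)) 1)
  have hV : 0 < V :=
    ENNReal.toReal_pos (Metric.measure_ball_pos _ _ one_pos).ne' measure_ball_lt_top.ne
  refine ⟨n * V * π * 2 ^ (n - 2), by positivity, fun a b ha hb => ?_⟩
  set s := √(1 + b)
  have hs : 0 < s := by positivity
  have hs2 : s ^ 2 = 1 + b := sq_sqrt (by linarith)
  have hpolar := integral_fun_norm_addHaar (volume : Measure (EuclideanSpace ℝ (Fin n)))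
    (fun r => (1 + (r - a) ^ 2 / s ^ 2) ^ (-(n : ℝ)))
  rw [hdim] at hpolar
  simp only [smul_eq_mul, nsmul_eq_mul] at hpolar
  rw [← hs2, hpolar, rpow_div_two_eq_sqrt _ (sq_nonneg s), rpow_div_two_eq_sqrt _ (sq_nonneg s),
    sqrt_sq hs.le, rpow_natCast, rpow_one]
  calc (n : ℝ) * (V * ∫ r in Set.Ioi (0 : ℝ),
          r ^ (n - 1) * (1 + (r - a) ^ 2 / s ^ 2) ^ (-(n : ℝ)))
      ≤ n * (V * ((s + a) ^ (n - 1) * (s * π))) := by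
        gcongr; exact setIntegral_Ioi_pow_pred_mul_rpow_neg_le hn ha hs
    _ = n * V * π * ((s + a) ^ (n - 1) * s) := by ring
    _ ≤ n * V * π * (2 ^ (n - 2) * (s ^ n + s * a ^ (n - 1))) :=
        mul_le_mul_of_nonneg_left (add_pow_pred_mul_le hn hs.le ha) (by positivity)
    _ = n * V * π * 2 ^ (n - 2) * (s ^ n + s * a ^ (n - 1)) := by ring
end

section
/- For all u, v ∈ ℝ³ with u₀ = √(1+|u|²), v₀ = √(1+|v|²), s = 2(u₀v₀ − u·v + 1), g = √(s−4), the Møller velocity satisfies v_M = g√(4+g²)/(u₀v₀) ≤ 4 and g√(4+g²) ≥ g² ≥ |u−v|²/(u₀v₀). -/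
open scoped RealInnerProductSpace

set_option maxHeartbeats 1000000 in
/-- Bounds on the Møller velocity and relative momentum:
`v_M = g√(4+g²)/(u₀v₀) ≤ 4` and `g√(4+g²) ≥ g² ≥ |u−v|²/(u₀v₀)`. -/
theorem moller_bounds (u v : EuclideanSpace ℝ (Fin 3)) :
    relMom u v * Real.sqrt (4 + relMom u v ^ 2) / (energy u * energy v) ≤ 4 ∧
    relMom u v ^ 2 ≤ relMom u v * Real.sqrt (4 + relMom u v ^ 2) ∧
    ‖u - v‖ ^ 2 / (energy u * energy v) ≤ relMom u v ^ 2 := by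
  set x := ‖u‖ with hxdef
  set y := ‖v‖ with hydef
  have hx : (0:ℝ) ≤ x := norm_nonneg u
  have hy : (0:ℝ) ≤ y := norm_nonneg v
  have hcabs : |⟪u, v⟫| ≤ x * y := abs_real_inner_le_norm u v
  set c := ⟪u, v⟫ with hcdef
  have hc1 : c ≤ x * y := (abs_le.mp hcabs).2
  have hc2 : -(x * y) ≤ c := (abs_le.mp hcabs).1
  have heu2 : (energy u) ^ 2 = 1 + x ^ 2 := Real.sq_sqrt (by positivity)
  have hev2 : (energy v) ^ 2 = 1 + y ^ 2 := Real.sq_sqrt (by positivity)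
  have heu0 : 0 ≤ energy u := Real.sqrt_nonneg _
  have hev0 : 0 ≤ energy v := Real.sqrt_nonneg _
  have heu1 : 1 ≤ energy u := by nlinarith [sq_nonneg x]
  have hev1 : 1 ≤ energy v := by nlinarith [sq_nonneg y]
  set P := energy u * energy v with hPdef
  have hP2 : P ^ 2 = (1 + x ^ 2) * (1 + y ^ 2) := by rw [hPdef, mul_pow, heu2, hev2]
  have hP1 : 1 ≤ P := by nlinarith
  have hPpos : 0 < P := by linarith
  have hP : 1 + x * y ≤ P := by
    nlinarith [sq_nonneg (x - y), sq_nonneg (P - (1 + x * y)), mul_nonneg hx hy]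
  have hrad : 0 ≤ 2 * (energy u * energy v - c + 1) - 4 := by
    rw [← hPdef] at *; nlinarith
  have hg0 : 0 ≤ relMom u v := Real.sqrt_nonneg _
  have hg2 : relMom u v ^ 2 = 2 * P - 2 * c - 2 := by
    rw [relMom, ← hcdef, ← hPdef, Real.sq_sqrt hrad]; ring
  set g := relMom u v with hgdef
  have hs0 : 0 ≤ Real.sqrt (4 + g ^ 2) := Real.sqrt_nonneg _
  have hs2 : (Real.sqrt (4 + g ^ 2)) ^ 2 = 4 + g ^ 2 := Real.sq_sqrt (by positivity)
  set s := Real.sqrt (4 + g ^ 2) with hsdef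
  refine ⟨?_, ?_, ?_⟩
  · rw [div_le_iff₀ hPpos]
    nlinarith [sq_nonneg (g - s)]
  · nlinarith [mul_le_mul_of_nonneg_left (show g ≤ s by nlinarith) hg0]
  · rw [div_le_iff₀ hPpos]
    have hnorm : ‖u - v‖ ^ 2 = x ^ 2 - 2 * c + y ^ 2 := norm_sub_sq_real u v
    rw [hnorm]
    clear_value x y c P g s
    clear hnorm hcabs hrad hgdef hsdef hxdef hydef hcdef hPdef heu2 hev2 heu0 hev0 heu1 hev1 u v
    have hP2' : P ^ 2 = 1 + x ^ 2 + y ^ 2 + x ^ 2 * y ^ 2 := by rw [hP2]; ring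
    have hA : 0 ≤ (P - (1 + x * y)) ^ 2 := sq_nonneg _
    have hB : 0 ≤ (x * y - c) * (P - 1) :=
      mul_nonneg (sub_nonneg.mpr hc1) (sub_nonneg.mpr hP1)
    have hgP : g ^ 2 * P = (2 * P - 2 * c - 2) * P := by rw [hg2]
    nlinarith [hA, hB, hP2', hgP]
end
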